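/- arXiv:2605.01701 — 7 statements merged into one kernel-verified Lean document; each statement's English description precedes it below -/
import Mathlib

section
/- Let λ be a real number with 0 < λ < 1 and set C_λ = (1/(λ * Real.log (1/λ))) * (8/((Real.exp 1)^2 * Real.log (1/λ)) + 2). Then for every natural number t ≥ 1 one has ∑_{q=1}^{t-1} λ^(t-1-q) / (q+1) ≤ C_λ / t. -/
lemma aux_geom_eq (x : ℝ) : ∀ n : ℕ,
    (1 - x) ^ 2 * ∑ k ∈ Finset.range n, ((k : ℝ) + 1) * x ^ k
      = 1 - ((n : ℝ) + 1) * x ^ n + (n : ℝ) * x ^ (n + 1) := by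
  intro n
  induction n with
  | zero => simp
  | succ n ih =>
    rw [Finset.sum_range_succ, mul_add, ih]
    push_cast
    ring

lemma aux_geom_le (x : ℝ) (h0 : 0 ≤ x) (h1 : x < 1) (n : ℕ) :
    ∑ k ∈ Finset.range n, ((k : ℝ) + 1) * x ^ k ≤ 1 / (1 - x) ^ 2 := by
  have hx1 : (0:ℝ) < 1 - x := by linarith
  have hu : (0:ℝ) < (1 - x) ^ 2 := by positivity
  rw [le_div_iff₀ hu, mul_comm, aux_geom_eq]
  have hxn : (n : ℝ) * x ^ (n + 1) ≤ ((n : ℝ) + 1) * x ^ n := by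
    have h2 : x ^ (n+1) ≤ x ^ n := pow_le_pow_of_le_one h0 h1.le (by omega)
    have hn0 : (0:ℝ) ≤ (n:ℝ) := Nat.cast_nonneg n
    nlinarith [pow_nonneg h0 n, pow_nonneg h0 (n+1)]
  linarith

theorem stmt_0 (lam : ℝ) (h0 : 0 < lam) (h1 : lam < 1) (Clam : ℝ)
    (hC : Clam = (1 / (lam * Real.log (1 / lam))) *
      (8 / (Real.exp 1 ^ 2 * Real.log (1 / lam)) + 2)) :
    ∀ t : ℕ, 1 ≤ t →
      ∑ q ∈ Finset.Icc 1 (t - 1), lam ^ (t - 1 - q) / ((q : ℝ) + 1) ≤ Clam / (t : ℝ) := by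
  intro t ht
  set L := Real.log (1 / lam) with hLdef
  have hL0 : 0 < L := Real.log_pos (by rw [lt_div_iff₀ h0]; linarith)
  have hu : (0:ℝ) < 1 - lam := by linarith
  have hA : lam * L ≤ 1 - lam := by
    have := Real.log_le_sub_one_of_pos (show (0:ℝ) < 1/lam by positivity)
    calc lam * L ≤ lam * (1/lam - 1) := by nlinarith
    _ = 1 - lam := by field_simp
  have he : Real.exp 1 < 2.7182818286 := Real.exp_one_lt_d9
  have he0 : (0:ℝ) < Real.exp 1 := Real.exp_pos 1
  have he2lo : (4:ℝ) ≤ Real.exp 1 ^ 2 := by nlinarith [Real.add_one_le_exp (1:ℝ)]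
  have he2hi : Real.exp 1 ^ 2 ≤ 8 := by nlinarith
  have ht0 : (0:ℝ) < (t:ℝ) := by exact_mod_cast ht
  -- key: 1/(1-lam)^2 ≤ Clam
  have hkey : 1 / (1 - lam) ^ 2 ≤ Clam := by
    have hC2 : Clam = (8 + 2 * (Real.exp 1 ^ 2) * L) / (lam * L * (Real.exp 1 ^ 2 * L)) := by
      rw [hC]; field_simp
    rw [hC2, div_le_div_iff₀ (by positivity) (by positivity)]
    have s1 : lam * Real.exp 1 ^ 2 * L ^ 2 ≤ 8 * lam * L ^ 2 := by nlinarith [mul_le_mul_of_nonneg_right he2hi (show (0:ℝ) ≤ lam * L^2 by positivity)]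
    have s2 : 8 * lam * L ^ 2 ≤ 8 * (1 - lam) * L := by nlinarith [hA, hL0]
    have s3 : 8 * L ≤ 8 * (1 - lam) + 8 * (1 - lam) * L := by nlinarith [hA]
    have s4 : 8 * (1 - lam) * L ≤ 8 * (1 - lam) ^ 2 + 8 * (1 - lam) ^ 2 * L := by nlinarith [hu]
    have s5 : 8 * (1 - lam) ^ 2 * L ≤ 2 * Real.exp 1 ^ 2 * (1 - lam) ^ 2 * L := by
      nlinarith [mul_pos (mul_pos hu hu) hL0]
    nlinarith
  -- termwise bound then geometric sum
  have hterm : ∀ q ∈ Finset.Icc 1 (t-1),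
      lam ^ (t - 1 - q) / ((q : ℝ) + 1)
        ≤ ((((t-1-q : ℕ)):ℝ) + 1) * lam ^ (t - 1 - q) / (t:ℝ) := by
    intro q hq
    simp only [Finset.mem_Icc] at hq
    have hq1 : 1 ≤ q := hq.1
    have hq2 : q ≤ t - 1 := hq.2
    set k := t - 1 - q with hk
    have hqk : q + (k + 1) = t := by omega
    have hpow : (0:ℝ) ≤ lam ^ k := by positivity
    rw [div_le_div_iff₀ (by positivity) ht0]
    have hfac : (t:ℝ) ≤ ((q:ℝ) + 1) * ((k:ℝ) + 1) := by
      have hcast : (q:ℝ) + ((k:ℝ) + 1) = (t:ℝ) := by exact_mod_cast hqk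
      rw [← hcast]
      have hq0 : (1:ℝ) ≤ (q:ℝ) := by exact_mod_cast hq1
      have hk0 : (0:ℝ) ≤ (k:ℝ) := Nat.cast_nonneg k
      nlinarith
    calc lam ^ k * (t:ℝ) ≤ lam ^ k * (((q:ℝ) + 1) * ((k:ℝ) + 1)) := by
          exact mul_le_mul_of_nonneg_left hfac hpow
    _ = ((k:ℝ) + 1) * lam ^ k * ((q:ℝ) + 1) := by ring
  have hsum1 : ∑ q ∈ Finset.Icc 1 (t-1), lam ^ (t - 1 - q) / ((q : ℝ) + 1)
      ≤ ∑ q ∈ Finset.Icc 1 (t-1), ((((t-1-q : ℕ)):ℝ) + 1) * lam ^ (t - 1 - q) / (t:ℝ) :=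
    Finset.sum_le_sum hterm
  have hre : ∑ q ∈ Finset.Icc 1 (t-1), ((((t-1-q : ℕ)):ℝ) + 1) * lam ^ (t - 1 - q)
      = ∑ k ∈ Finset.range (t-1), ((k:ℝ) + 1) * lam ^ k := by
    apply Finset.sum_nbij' (fun q => t - 1 - q) (fun k => t - 1 - k)
    · intro a ha; simp only [Finset.mem_Icc] at ha; simp only [Finset.mem_range]; omega
    · intro a ha; simp only [Finset.mem_range] at ha; simp only [Finset.mem_Icc]; omega
    · intro a ha; simp only [Finset.mem_Icc] at ha; omega
    · intro a ha; simp only [Finset.mem_range] at ha; omega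
    · intro a ha; rfl
  calc ∑ q ∈ Finset.Icc 1 (t-1), lam ^ (t - 1 - q) / ((q : ℝ) + 1)
      ≤ ∑ q ∈ Finset.Icc 1 (t-1), ((((t-1-q : ℕ)):ℝ) + 1) * lam ^ (t - 1 - q) / (t:ℝ) := hsum1
  _ = (∑ q ∈ Finset.Icc 1 (t-1), ((((t-1-q : ℕ)):ℝ) + 1) * lam ^ (t - 1 - q)) / (t:ℝ) := by
        rw [Finset.sum_div]
  _ = (∑ k ∈ Finset.range (t-1), ((k:ℝ) + 1) * lam ^ k) / (t:ℝ) := by rw [hre]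
  _ ≤ (1 / (1 - lam) ^ 2) / (t:ℝ) := by
        gcongr
        exact aux_geom_le lam h0.le h1 (t-1)
  _ ≤ Clam / (t:ℝ) := by gcongr
end

section
/- Let u, S, α : ℕ → ℝ be sequences with u t ≥ 0 and α t ≥ 0 for all t, S nondecreasing, and S 0 ≥ (u 0)^2. If (u t)^2 ≤ S t + ∑_{τ=1}^{t-1} α τ * u τ holds for every t, then u t ≤ Real.sqrt (S t) + ∑_{τ=1}^{t-1} α τ for every t. -/
/-!
Strong induction on `t`. The bound `B t = √(S t) + ∑_{1≤τ<t} α τ` is nondecreasing, so the induction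
hypothesis gives `u τ ≤ B t` for every `τ < t`; writing `A = ∑_{1≤τ<t} α τ`, the recursion then yields
`(u t)² ≤ S t + A (√(S t) + A) ≤ (√(S t) + A)²`.
-/

open Finset

lemma le_add_of_sq_le_sq_add_mul {x s A : ℝ} (hs : 0 ≤ s) (hA : 0 ≤ A)
    (h : x ^ 2 ≤ s ^ 2 + A * (s + A)) : x ≤ s + A := by
  have hsq : x ^ 2 ≤ (s + A) ^ 2 := by nlinarith
  exact (le_abs_self x).trans (abs_le_of_sq_le_sq hsq (by positivity))

lemma monotone_sqrt_add_sum_Icc {S α : ℕ → ℝ} (hS : Monotone S) (hα : ∀ t, 0 ≤ α t) :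
    Monotone fun t => √(S t) + ∑ τ ∈ Icc 1 (t - 1), α τ := fun s t hst =>
  add_le_add (Real.sqrt_le_sqrt (hS hst))
    (sum_le_sum_of_subset_of_nonneg (Icc_subset_Icc_right (by omega)) fun i _ _ => hα i)

theorem stmt_1_general (u S α : ℕ → ℝ)
    (hα : ∀ t, 0 ≤ α t)
    (hS : Monotone S) (hS0 : (u 0) ^ 2 ≤ S 0)
    (hrec : ∀ t, (u t) ^ 2 ≤ S t + ∑ τ ∈ Finset.Icc 1 (t - 1), α τ * u τ) :
    ∀ t, u t ≤ Real.sqrt (S t) + ∑ τ ∈ Finset.Icc 1 (t - 1), α τ := by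
  have hB := monotone_sqrt_add_sum_Icc hS hα
  intro t
  induction t using Nat.strong_induction_on with
  | _ t ih =>
    set A := ∑ τ ∈ Icc 1 (t - 1), α τ
    have hSt : 0 ≤ S t := (sq_nonneg _).trans (hS0.trans (hS t.zero_le))
    have hsum : ∑ τ ∈ Icc 1 (t - 1), α τ * u τ ≤ A * (√(S t) + A) := by
      rw [sum_mul]
      refine sum_le_sum fun τ hτ => mul_le_mul_of_nonneg_left ?_ (hα τ)
      have hτt : τ < t := by grind
      exact (ih τ hτt).trans (hB hτt.le)
    refine le_add_of_sq_le_sq_add_mul (Real.sqrt_nonneg _) (sum_nonneg fun τ _ => hα τ) ?_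
    rw [Real.sq_sqrt hSt]
    exact (hrec t).trans (by linarith)

theorem stmt_1 (u S α : ℕ → ℝ)
    (hu : ∀ t, 0 ≤ u t) (hα : ∀ t, 0 ≤ α t)
    (hS : Monotone S) (hS0 : (u 0) ^ 2 ≤ S 0)
    (hrec : ∀ t, (u t) ^ 2 ≤ S t + ∑ τ ∈ Finset.Icc 1 (t - 1), α τ * u τ) :
    ∀ t, u t ≤ Real.sqrt (S t) + ∑ τ ∈ Finset.Icc 1 (t - 1), α τ :=
  stmt_1_general u S α hα hS hS0 hrec
end

section
/- Let E be a real Hilbert space and f : E → ℝ a differentiable convex function whose gradient ∇f is β-Lipschitz for some β > 0. If 0 ≤ η ≤ 2/β, then for all w, w' ∈ E, ‖(w - η • ∇f w) - (w' - η • ∇f w')‖ ≤ ‖w - w'‖, i.e., the gradient-descent map w ↦ w - η • ∇f w is 1-Lipschitz. -/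
open RealInnerProductSpace

section Aux
variable {E : Type*} [NormedAddCommGroup E] [InnerProductSpace ℝ E] [CompleteSpace E]

private lemma curve_hasDerivAt (f : E → ℝ) (hdiff : Differentiable ℝ f) (x y : E) (t : ℝ) :
    HasDerivAt (fun t : ℝ => f (x + t • (y - x)))
      ⟪gradient f (x + t • (y - x)), y - x⟫ t := by
  have hc : HasDerivAt (fun t : ℝ => x + t • (y - x)) (y - x) t := by
    simpa using ((hasDerivAt_id t).smul_const (y - x)).const_add x
  have hf := (hdiff (x + t • (y - x))).hasGradientAt.hasFDerivAt
  simpa [Function.comp_def] using hf.comp_hasDerivAt t hc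

private lemma curve_convex (f : E → ℝ) (hconv : ConvexOn ℝ Set.univ f) (x y : E) :
    ConvexOn ℝ Set.univ (fun t : ℝ => f (x + t • (y - x))) := by
  have h := hconv.comp_affineMap (AffineMap.lineMap x y)
  have : (fun t : ℝ => f (x + t • (y - x))) = f ∘ (AffineMap.lineMap x y) := by
    ext t; simp [AffineMap.lineMap_apply, add_comm]
  rw [this]; simpa using h

/-- First order condition of convexity. -/
private lemma grad_ineq (f : E → ℝ) (hdiff : Differentiable ℝ f)
    (hconv : ConvexOn ℝ Set.univ f) (x y : E) :
    f x + ⟪gradient f x, y - x⟫ ≤ f y := by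
  have h := (curve_convex f hconv x y).le_slope_of_hasDerivAt (Set.mem_univ (0:ℝ))
    (Set.mem_univ (1:ℝ)) one_pos (by simpa using curve_hasDerivAt f hdiff x y 0)
  simp only [slope_def_field] at h
  simp only [zero_smul, add_zero, one_smul] at h
  have h1 : x + (y - x) = y := by abel
  rw [h1] at h
  have : (f y - f x) / (1 - 0) = f y - f x := by norm_num
  rw [this] at h
  have hg : ⟪gradient f x, y - x⟫ = (fderiv ℝ f x) y - (fderiv ℝ f x) x := by simp
  linarith

/-- Gradient continuity from the Lipschitz bound. -/
private lemma grad_cont (f : E → ℝ) (β : ℝ) (hβ : 0 < β)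
    (hlip : ∀ w w' : E, ‖gradient f w - gradient f w'‖ ≤ β * ‖w - w'‖) :
    Continuous (gradient f) := by
  refine LipschitzWith.continuous (K := β.toNNReal) ?_
  refine LipschitzWith.of_dist_le_mul fun a b => ?_
  rw [dist_eq_norm, dist_eq_norm]
  calc ‖gradient f a - gradient f b‖ ≤ β * ‖a - b‖ := hlip a b
    _ = (β.toNNReal : ℝ) * ‖a - b‖ := by rw [Real.coe_toNNReal _ hβ.le]

/-- Descent lemma. -/
private lemma descent (f : E → ℝ) (hdiff : Differentiable ℝ f)
    (β : ℝ) (hβ : 0 < β)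
    (hlip : ∀ w w' : E, ‖gradient f w - gradient f w'‖ ≤ β * ‖w - w'‖) (x y : E) :
    f y ≤ f x + ⟪gradient f x, y - x⟫ + β / 2 * ‖y - x‖ ^ 2 := by
  set φ' : ℝ → ℝ := fun t => ⟪gradient f (x + t • (y - x)), y - x⟫ with hφ'
  have hder : ∀ t ∈ Set.uIcc (0:ℝ) 1,
      HasDerivAt (fun t : ℝ => f (x + t • (y - x))) (φ' t) t :=
    fun t _ => curve_hasDerivAt f hdiff x y t
  have hcont : Continuous φ' := by
    have hg := grad_cont f β hβ hlip
    exact (hg.comp (by continuity)).inner continuous_const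
  have hint : IntervalIntegrable φ' MeasureTheory.volume 0 1 :=
    hcont.intervalIntegrable 0 1
  have hftc := intervalIntegral.integral_eq_sub_of_hasDerivAt hder hint
  simp only [zero_smul, add_zero, one_smul] at hftc
  have h1 : x + (y - x) = y := by abel
  rw [h1] at hftc
  set C : ℝ := β * ‖y - x‖ ^ 2 with hC
  have hint2 : IntervalIntegrable (fun t : ℝ => φ' 0 + C * t) MeasureTheory.volume 0 1 :=
    (continuous_const.add (continuous_const.mul continuous_id)).intervalIntegrable 0 1
  have hbound : ∀ t ∈ Set.Icc (0:ℝ) 1, φ' t ≤ φ' 0 + C * t := by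
    intro t ht
    have hdiffinner : φ' t - φ' 0 =
        ⟪gradient f (x + t • (y - x)) - gradient f (x + (0:ℝ) • (y - x)), y - x⟫ := by
      rw [inner_sub_left]
    have hle : ⟪gradient f (x + t • (y - x)) - gradient f (x + (0:ℝ) • (y - x)), y - x⟫
        ≤ ‖gradient f (x + t • (y - x)) - gradient f (x + (0:ℝ) • (y - x))‖ * ‖y - x‖ :=
      real_inner_le_norm _ _
    have hnd : ‖gradient f (x + t • (y - x)) - gradient f (x + (0:ℝ) • (y - x))‖
        ≤ β * (t * ‖y - x‖) := by
      have := hlip (x + t • (y - x)) (x + (0:ℝ) • (y - x))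
      have harg : (x + t • (y - x)) - (x + (0:ℝ) • (y - x)) = t • (y - x) := by
        simp
      rw [harg, norm_smul, Real.norm_eq_abs, abs_of_nonneg ht.1] at this
      exact this
    have hyx : (0:ℝ) ≤ ‖y - x‖ := norm_nonneg _
    have hCt : C * t = β * (t * ‖y - x‖) * ‖y - x‖ := by rw [hC]; ring
    have := mul_le_mul_of_nonneg_right hnd hyx
    linarith [hdiffinner.le, hdiffinner.ge, hle]
  have hmono := intervalIntegral.integral_mono_on zero_le_one hint hint2 hbound
  have hval : ∫ t in (0:ℝ)..1, (φ' 0 + C * t) = φ' 0 + C / 2 := by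
    have hi : IntervalIntegrable (fun t : ℝ => C * t) MeasureTheory.volume 0 1 := by
      apply Continuous.intervalIntegrable; fun_prop
    rw [intervalIntegral.integral_add intervalIntegrable_const hi,
      intervalIntegral.integral_const_mul]
    simp [integral_id]
    ring
  rw [hftc, hval] at hmono
  have hφ'0 : φ' 0 = ⟪gradient f x, y - x⟫ := by simp [hφ']
  rw [hφ'0] at hmono
  have : C / 2 = β / 2 * ‖y - x‖ ^ 2 := by rw [hC]; ring
  linarith [hmono, this.le]

/-- Strengthened first-order bound. -/
private lemma star (f : E → ℝ) (hdiff : Differentiable ℝ f)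
    (hconv : ConvexOn ℝ Set.univ f) (β : ℝ) (hβ : 0 < β)
    (hlip : ∀ w w' : E, ‖gradient f w - gradient f w'‖ ≤ β * ‖w - w'‖) (x y : E) :
    f x + ⟪gradient f x, y - x⟫ + 1 / (2 * β) * ‖gradient f y - gradient f x‖ ^ 2 ≤ f y := by
  set gx := gradient f x
  set gy := gradient f y
  set z : E := y - β⁻¹ • (gy - gx) with hz
  have h1 := grad_ineq f hdiff hconv x z
  have h2 := descent f hdiff β hβ hlip y z
  have e1 : ⟪gx, z - x⟫ = ⟪gx, y - x⟫ - β⁻¹ * ⟪gx, gy - gx⟫ := by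
    have : z - x = (y - x) - β⁻¹ • (gy - gx) := by rw [hz]; abel
    rw [this, inner_sub_right, real_inner_smul_right]
  have e2 : ⟪gy, z - y⟫ = -(β⁻¹ * ⟪gy, gy - gx⟫) := by
    have : z - y = -(β⁻¹ • (gy - gx)) := by rw [hz]; abel
    rw [this, inner_neg_right, real_inner_smul_right]
  have e3 : ‖z - y‖ ^ 2 = β⁻¹ ^ 2 * ‖gy - gx‖ ^ 2 := by
    have : z - y = -(β⁻¹ • (gy - gx)) := by rw [hz]; abel
    rw [this, norm_neg, norm_smul, mul_pow, Real.norm_eq_abs, sq_abs]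
  have e4 : ⟪gy, gy - gx⟫ - ⟪gx, gy - gx⟫ = ‖gy - gx‖ ^ 2 := by
    rw [← inner_sub_left, real_inner_self_eq_norm_sq]
  rw [e1] at h1
  rw [e2, e3] at h2
  have e5 : β⁻¹ * ⟪gy, gy - gx⟫ - β⁻¹ * ⟪gx, gy - gx⟫ = β⁻¹ * ‖gy - gx‖ ^ 2 := by
    rw [← mul_sub, e4]
  have e6 : β⁻¹ * ‖gy - gx‖ ^ 2 = 2 * (1 / (2 * β) * ‖gy - gx‖ ^ 2) := by
    field_simp
  have e7 : β / 2 * (β⁻¹ ^ 2 * ‖gy - gx‖ ^ 2) = 1 / (2 * β) * ‖gy - gx‖ ^ 2 := by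
    field_simp
  linarith [h1, h2, e5, e6, e7]

/-- Co-coercivity (Baillon–Haddad). -/
private lemma cocoercive (f : E → ℝ) (hdiff : Differentiable ℝ f)
    (hconv : ConvexOn ℝ Set.univ f) (β : ℝ) (hβ : 0 < β)
    (hlip : ∀ w w' : E, ‖gradient f w - gradient f w'‖ ≤ β * ‖w - w'‖) (x y : E) :
    (1 / β) * ‖gradient f y - gradient f x‖ ^ 2 ≤ ⟪gradient f y - gradient f x, y - x⟫ := by
  have h1 := star f hdiff hconv β hβ hlip x y
  have h2 := star f hdiff hconv β hβ hlip y x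
  have e1 : ⟪gradient f x, y - x⟫ + ⟪gradient f y, x - y⟫
      = -⟪gradient f y - gradient f x, y - x⟫ := by
    rw [inner_sub_left]
    have : x - y = -(y - x) := by abel
    rw [this, inner_neg_right]; ring
  have e2 : ‖gradient f x - gradient f y‖ = ‖gradient f y - gradient f x‖ := by
    rw [← norm_neg]; congr 1; abel
  rw [e2] at h2
  have e8 : 1 / (2 * β) * ‖gradient f y - gradient f x‖ ^ 2
      + 1 / (2 * β) * ‖gradient f y - gradient f x‖ ^ 2
      = 1 / β * ‖gradient f y - gradient f x‖ ^ 2 := by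
    field_simp; ring
  linarith [h1, h2, e1, e8]

end Aux

theorem stmt_2 {E : Type*} [NormedAddCommGroup E] [InnerProductSpace ℝ E] [CompleteSpace E]
    (f : E → ℝ) (hdiff : Differentiable ℝ f)
    (hconv : ConvexOn ℝ Set.univ f)
    (β : ℝ) (hβ : 0 < β)
    (hlip : ∀ w w' : E, ‖gradient f w - gradient f w'‖ ≤ β * ‖w - w'‖)
    (η : ℝ) (hη0 : 0 ≤ η) (hη : η ≤ 2 / β)
    (w w' : E) :
    ‖(w - η • gradient f w) - (w' - η • gradient f w')‖ ≤ ‖w - w'‖ := by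
  set d : E := w - w' with hd
  set h : E := gradient f w - gradient f w' with hh
  have hkey : (1 / β) * ‖h‖ ^ 2 ≤ ⟪h, d⟫ := by
    simpa using cocoercive f hdiff hconv β hβ hlip w' w
  have harg : (w - η • gradient f w) - (w' - η • gradient f w') = d - η • h := by
    rw [hd, hh, smul_sub]; abel
  rw [harg]
  have hsq : ‖d - η • h‖ ^ 2 ≤ ‖d‖ ^ 2 := by
    have hexp : ‖d - η • h‖ ^ 2 = ‖d‖ ^ 2 - 2 * (η * ⟪d, h⟫) + η ^ 2 * ‖h‖ ^ 2 := by
      rw [norm_sub_sq_real, real_inner_smul_right, norm_smul, Real.norm_eq_abs, mul_pow, sq_abs]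
    have hcomm : ⟪d, h⟫ = ⟪h, d⟫ := real_inner_comm h d
    rw [hexp, hcomm]
    have hηβ : η * β ≤ 2 := by rw [← le_div_iff₀ hβ]; exact hη
    have hkey' : ‖h‖ ^ 2 ≤ β * ⟪h, d⟫ := by
      rw [div_mul_eq_mul_div, div_le_iff₀ hβ, one_mul] at hkey
      linarith [hkey]
    have hI : (0:ℝ) ≤ ⟪h, d⟫ := le_trans (by positivity) hkey
    nlinarith [mul_le_mul_of_nonneg_left hkey' (sq_nonneg η),
      mul_nonneg (sub_nonneg.2 hηβ) (mul_nonneg hη0 hI)]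
  calc ‖d - η • h‖ = Real.sqrt (‖d - η • h‖ ^ 2) := (Real.sqrt_sq (norm_nonneg _)).symm
    _ ≤ Real.sqrt (‖d‖ ^ 2) := Real.sqrt_le_sqrt hsq
    _ = ‖d‖ := Real.sqrt_sq (norm_nonneg _)
end

section
/- Let n ≥ 1 and let H : Matrix (Fin n) (Fin n) ℝ be symmetric (Hᵀ = H) with nonnegative entries and all row sums equal to 1. Suppose μ ∈ [0,1) satisfies: for every v : Fin n → ℝ with ∑_i v i = 0, ‖H.mulVec v‖ ≤ μ * ‖v‖ (Euclidean norm). Then for every t : ℕ and every i : Fin n, ∑_{j} |(H^t) i j - 1/n| ≤ n^(3/2) * ((μ + 1)/2)^t. -/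
theorem stmt_3 (n : ℕ) (hn : 1 ≤ n)
    (H : Matrix (Fin n) (Fin n) ℝ)
    (hsymm : H.transpose = H)
    (hnonneg : ∀ i j, 0 ≤ H i j)
    (hrow : ∀ i, ∑ j, H i j = 1)
    (μ : ℝ) (hμ0 : 0 ≤ μ) (hμ1 : μ < 1)
    (hspec : ∀ v : Fin n → ℝ, ∑ i, v i = 0 →
      Real.sqrt (∑ i, (H.mulVec v i) ^ 2) ≤ μ * Real.sqrt (∑ i, (v i) ^ 2))
    (t : ℕ) (i : Fin n) :
    ∑ j, |(H ^ t) i j - 1 / (n : ℝ)| ≤ (n : ℝ) ^ ((3 : ℝ) / 2) * ((μ + 1) / 2) ^ t := by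
  have hn' : (1:ℝ) ≤ (n:ℝ) := by exact_mod_cast hn
  have hnne : (n:ℝ) ≠ 0 := by positivity
  -- column sums are 1
  have hcol : ∀ j, ∑ k, H k j = 1 := by
    intro j
    calc ∑ k, H k j = ∑ k, H j k := by
          refine Finset.sum_congr rfl fun k _ => ?_
          conv_lhs => rw [← hsymm]
          rfl
      _ = 1 := hrow j
  -- H preserves mean zero
  have hmz : ∀ v : Fin n → ℝ, ∑ k, v k = 0 → ∑ k, H.mulVec v k = 0 := by
    intro v hv
    simp only [Matrix.mulVec, dotProduct]
    rw [Finset.sum_comm]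
    calc ∑ j, ∑ k, H k j * v j = ∑ j, (∑ k, H k j) * v j := by
          simp [Finset.sum_mul]
      _ = ∑ j, v j := by simp [hcol]
      _ = 0 := hv
  -- powers preserve mean zero
  have hmzt : ∀ s, ∀ v : Fin n → ℝ, ∑ k, v k = 0 → ∑ k, (H ^ s).mulVec v k = 0 := by
    intro s
    induction s with
    | zero => intro v hv; simpa [Matrix.one_mulVec] using hv
    | succ s ih =>
      intro v hv
      have h1 : (H ^ (s+1)).mulVec v = H.mulVec ((H ^ s).mulVec v) := by
        rw [pow_succ', ← Matrix.mulVec_mulVec]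
      rw [h1]
      exact hmz _ (ih v hv)
  -- iterated spectral bound
  have key : ∀ s, ∀ v : Fin n → ℝ, ∑ k, v k = 0 →
      Real.sqrt (∑ k, ((H ^ s).mulVec v k) ^ 2) ≤ μ ^ s * Real.sqrt (∑ k, (v k) ^ 2) := by
    intro s
    induction s with
    | zero => intro v hv; simp [Matrix.one_mulVec]
    | succ s ih =>
      intro v hv
      have h1 : (H ^ (s+1)).mulVec v = H.mulVec ((H ^ s).mulVec v) := by
        rw [pow_succ', ← Matrix.mulVec_mulVec]
      rw [h1]
      calc Real.sqrt (∑ k, (H.mulVec ((H ^ s).mulVec v) k) ^ 2)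
          ≤ μ * Real.sqrt (∑ k, ((H ^ s).mulVec v k) ^ 2) :=
            hspec _ (hmzt s v hv)
        _ ≤ μ * (μ ^ s * Real.sqrt (∑ k, (v k) ^ 2)) :=
            mul_le_mul_of_nonneg_left (ih v hv) hμ0
        _ = μ ^ (s+1) * Real.sqrt (∑ k, (v k) ^ 2) := by ring
  -- row sums of powers
  have hrowt : ∀ s (j : Fin n), ∑ k, (H ^ s) j k = 1 := by
    intro s
    induction s with
    | zero => intro j; simp [Matrix.one_apply, Finset.sum_ite_eq]
    | succ s ih =>
      intro j
      rw [pow_succ']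
      simp only [Matrix.mul_apply]
      rw [Finset.sum_comm]
      calc ∑ k, ∑ l, H j k * (H ^ s) k l = ∑ k, H j k * ∑ l, (H ^ s) k l := by
            simp [Finset.mul_sum]
        _ = 1 := by simp [ih, hrow]
  -- symmetry of powers
  have hsymt : (H ^ t).transpose = H ^ t := by
    rw [Matrix.transpose_pow, hsymm]
  -- the test vector
  set v : Fin n → ℝ := fun k => (if k = i then (1:ℝ) else 0) - 1 / n with hvdef
  have hv : ∑ k, v k = 0 := by
    simp [hvdef, Finset.sum_sub_distrib, Finset.sum_ite_eq', hnne]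
  have hw : ∀ j, (H ^ t).mulVec v j = (H ^ t) i j - 1 / n := by
    intro j
    have hji : (H ^ t) j i = (H ^ t) i j := by
      conv_lhs => rw [← hsymt]
      rfl
    simp only [Matrix.mulVec, dotProduct, hvdef, mul_sub, mul_ite, mul_one, mul_zero]
    rw [Finset.sum_sub_distrib]
    rw [Finset.sum_ite_eq' Finset.univ i (fun k => (H ^ t) j k)]
    simp only [Finset.mem_univ, if_true]
    rw [← Finset.sum_mul, hrowt t j, one_mul, hji]
  -- Cauchy-Schwarz
  have hCS : ∑ j, |(H ^ t) i j - 1 / (n:ℝ)| ≤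
      Real.sqrt n * Real.sqrt (∑ k, ((H ^ t).mulVec v k) ^ 2) := by
    have := Real.sum_mul_le_sqrt_mul_sqrt Finset.univ
      (fun _ : Fin n => (1:ℝ)) (fun k => |(H ^ t).mulVec v k|)
    simp only [one_mul, sq_abs, one_pow] at this
    calc ∑ j, |(H ^ t) i j - 1 / (n:ℝ)| = ∑ j, |(H ^ t).mulVec v j| := by
          refine Finset.sum_congr rfl fun j _ => ?_
          rw [hw j]
      _ ≤ Real.sqrt (∑ _k : Fin n, (1:ℝ)) * Real.sqrt (∑ k, ((H ^ t).mulVec v k) ^ 2) := this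
      _ = Real.sqrt n * Real.sqrt (∑ k, ((H ^ t).mulVec v k) ^ 2) := by
          simp
  -- norm of test vector ≤ 1
  have hvnorm : Real.sqrt (∑ k, (v k) ^ 2) ≤ 1 := by
    rw [show (1:ℝ) = Real.sqrt 1 by simp]
    apply Real.sqrt_le_sqrt
    have : ∑ k, (v k) ^ 2 = 1 - 1 / n := by
      simp only [hvdef, sub_sq]
      rw [Finset.sum_add_distrib, Finset.sum_sub_distrib]
      have h1 : ∑ k, (if k = i then (1:ℝ) else 0) ^ 2 = 1 := by
        simp [ite_pow, Finset.sum_ite_eq']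
      have h2 : ∑ k, 2 * (if k = i then (1:ℝ) else 0) * (1 / n) = 2 / n := by
        simp [mul_ite, Finset.sum_ite_eq']
        ring
      have h3 : ∑ _k : Fin n, ((1:ℝ) / n) ^ 2 = 1 / n := by
        simp [Finset.sum_const]
        field_simp
      rw [h1, h2, h3]
      ring
    rw [this]
    have : (0:ℝ) ≤ 1 / n := by positivity
    linarith
  -- combine
  calc ∑ j, |(H ^ t) i j - 1 / (n:ℝ)|
      ≤ Real.sqrt n * Real.sqrt (∑ k, ((H ^ t).mulVec v k) ^ 2) := hCS
    _ ≤ Real.sqrt n * (μ ^ t * Real.sqrt (∑ k, (v k) ^ 2)) :=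
        mul_le_mul_of_nonneg_left (key t v hv) (Real.sqrt_nonneg _)
    _ ≤ Real.sqrt n * (μ ^ t * 1) := by
        apply mul_le_mul_of_nonneg_left _ (Real.sqrt_nonneg _)
        exact mul_le_mul_of_nonneg_left hvnorm (pow_nonneg hμ0 t)
    _ ≤ (n : ℝ) ^ ((3:ℝ)/2) * ((μ + 1) / 2) ^ t := by
        rw [mul_one]
        apply mul_le_mul
        · rw [Real.sqrt_eq_rpow]
          exact Real.rpow_le_rpow_of_exponent_le hn' (by norm_num)
        · exact pow_le_pow_left₀ hμ0 (by linarith) t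
        · exact pow_nonneg hμ0 t
        · positivity
end

section
/- Consider the decentralized SGD iterates w_S with common initialization w_S 0 i = w0 for all workers i. Assume f is L-Lipschitz in w (for every z, f_z is differentiable and ‖∇f_z w‖ ≤ L for all w, with L > 0) and λ ∈ [0,1) is a consensus rate for P. Then for every t : ℕ, Real.sqrt (∑_{i : Fin m} ‖w̄_S t - w_S t i‖^2) ≤ 2 * Real.sqrt m * L * ∑_{q=1}^{t} η q * λ^(t-q). -/
/-!
Write `Δ_t i = w̄_t - w_t i` for the deviation of worker `i` from the network average. Gossiping
with a doubly stochastic `P` preserves the average, so `Δ_{t+1} = P Δ_t + η_{t+1} (g - ḡ)` where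
`g` are the local stochastic gradients. The deviations always sum to zero, so the consensus rate
contracts the first term by `λ` in the `ℓ²`-norm over workers, while the second has norm at most
`η_{t+1} · 2 √m L`. The resulting recursion `D_{t+1} ≤ λ D_t + 2 √m L η_{t+1}` with `D_0 = 0`
unrolls to the claimed geometric sum.
-/

open Finset

namespace DecentralizedSGD

variable {ι E : Type*} [Fintype ι] [NormedAddCommGroup E]

lemma sqrt_sum_norm_add_sq_le (a b : ι → E) :
    √(∑ i, ‖a i + b i‖ ^ 2) ≤ √(∑ i, ‖a i‖ ^ 2) + √(∑ i, ‖b i‖ ^ 2) := by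
  simpa only [PiLp.norm_eq_of_L2, PiLp.add_apply] using
    norm_add_le (WithLp.toLp 2 a) (WithLp.toLp 2 b)

lemma sqrt_sum_norm_sq_le {c : ι → E} {B : ℝ} (hB : 0 ≤ B) (hc : ∀ i, ‖c i‖ ≤ B) :
    √(∑ i, ‖c i‖ ^ 2) ≤ √(Fintype.card ι) * B := by
  have hsum : ∑ i, ‖c i‖ ^ 2 ≤ Fintype.card ι * B ^ 2 := by
    simpa using sum_le_sum fun i (_ : i ∈ univ) => pow_le_pow_left₀ (norm_nonneg _) (hc i) 2
  calc √(∑ i, ‖c i‖ ^ 2) ≤ √(Fintype.card ι * B ^ 2) := Real.sqrt_le_sqrt hsum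
    _ = √(Fintype.card ι) * B := by rw [Real.sqrt_mul (by positivity), Real.sqrt_sq hB]

variable [NormedSpace ℝ E]

noncomputable def average (x : ι → E) : E := (Fintype.card ι : ℝ)⁻¹ • ∑ i, x i

noncomputable def consensusDist (x : ι → E) : ℝ := √(∑ i, ‖average x - x i‖ ^ 2)

lemma average_const [Nonempty ι] (c : E) : average (fun _ : ι => c) = c := by
  rw [average, sum_const, card_univ, ← Nat.cast_smul_eq_nsmul ℝ, smul_smul,
    inv_mul_cancel₀ (by positivity), one_smul]

lemma sum_average_sub (x : ι → E) : ∑ i, (average x - x i) = 0 := by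
  rcases isEmpty_or_nonempty ι with _ | _
  · simp
  · rw [sum_sub_distrib, sum_const, card_univ, average, ← Nat.cast_smul_eq_nsmul ℝ, smul_smul,
      mul_inv_cancel₀ (by positivity), one_smul, sub_self]

lemma norm_average_le [Nonempty ι] {x : ι → E} {L : ℝ} (hx : ∀ i, ‖x i‖ ≤ L) :
    ‖average x‖ ≤ L := by
  have hcard : (0 : ℝ) < Fintype.card ι := by positivity
  calc ‖average x‖ ≤ (Fintype.card ι : ℝ)⁻¹ * ∑ i, ‖x i‖ := by
        rw [average, norm_smul, norm_inv, Real.norm_natCast]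
        gcongr
        exact norm_sum_le _ _
    _ ≤ (Fintype.card ι : ℝ)⁻¹ * (Fintype.card ι * L) := by
        gcongr
        simpa using sum_le_sum fun i (_ : i ∈ univ) => hx i
    _ = L := by field_simp

lemma consensusDist_const (c : E) : consensusDist (fun _ : ι => c) = 0 := by
  refine Real.sqrt_eq_zero'.mpr (le_of_eq (sum_eq_zero fun i _ => ?_))
  have : Nonempty ι := ⟨i⟩
  simp [average_const]

section Gossip

variable {P : ι → ι → ℝ}

lemma sum_gossip (hcol : ∀ l, ∑ i, P i l = 1) (x : ι → E) :
    ∑ i, ∑ l, P i l • x l = ∑ l, x l := by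
  rw [sum_comm]
  simp_rw [← sum_smul, hcol, one_smul]

lemma average_gossip_sub_smul (hcol : ∀ l, ∑ i, P i l = 1) (x g : ι → E) (η : ℝ) :
    average (fun i => ∑ l, P i l • x l - η • g i) = average x - η • average g := by
  simp only [average, sum_sub_distrib, sum_gossip hcol, ← smul_sum, smul_sub]
  rw [smul_comm]

lemma average_sub_gossip_step (hrow : ∀ i, ∑ l, P i l = 1) (hcol : ∀ l, ∑ i, P i l = 1)
    (x g : ι → E) (η : ℝ) (i : ι) :
    average (fun i => ∑ l, P i l • x l - η • g i) - (∑ l, P i l • x l - η • g i) =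
      ∑ l, P i l • (average x - x l) + η • (g i - average g) := by
  rw [average_gossip_sub_smul hcol]
  simp only [smul_sub, sum_sub_distrib, ← sum_smul, hrow i, one_smul]
  abel

lemma consensusDist_gossip_step_le (hrow : ∀ i, ∑ l, P i l = 1) (hcol : ∀ l, ∑ i, P i l = 1)
    {lam : ℝ} (hlam : 0 ≤ lam)
    (hcons : ∀ y : ι → E, ∑ i, y i = 0 → ∑ i, ‖∑ l, P i l • y l‖ ^ 2 ≤ lam ^ 2 * ∑ i, ‖y i‖ ^ 2)
    (x g : ι → E) {η L : ℝ} (hη : 0 ≤ η) (hL : 0 ≤ L) (hg : ∀ i, ‖g i‖ ≤ L) :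
    consensusDist (fun i => ∑ l, P i l • x l - η • g i) ≤
      lam * consensusDist x + η * (2 * √(Fintype.card ι) * L) := by
  have hmix : √(∑ i, ‖∑ l, P i l • (average x - x l)‖ ^ 2) ≤ lam * consensusDist x := by
    calc _ ≤ √(lam ^ 2 * ∑ i, ‖average x - x i‖ ^ 2) :=
          Real.sqrt_le_sqrt (hcons _ (sum_average_sub x))
      _ = lam * consensusDist x := by
          rw [Real.sqrt_mul (sq_nonneg _), Real.sqrt_sq hlam, consensusDist]
  have hnoise : √(∑ i, ‖η • (g i - average g)‖ ^ 2) ≤ η * (2 * √(Fintype.card ι) * L) := by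
    refine (sqrt_sum_norm_sq_le (B := η * (2 * L)) (by positivity) fun i => ?_).trans_eq
      (by ring)
    have : Nonempty ι := ⟨i⟩
    rw [norm_smul, Real.norm_of_nonneg hη]
    gcongr
    calc ‖g i - average g‖ ≤ ‖g i‖ + ‖average g‖ := norm_sub_le _ _
      _ ≤ 2 * L := by linarith [hg i, norm_average_le hg]
  calc _ = √(∑ i, ‖∑ l, P i l • (average x - x l) + η • (g i - average g)‖ ^ 2) := by
        simp only [consensusDist, average_sub_gossip_step hrow hcol]
    _ ≤ _ := sqrt_sum_norm_add_sq_le _ _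
    _ ≤ _ := add_le_add hmix hnoise

end Gossip

lemma le_pow_mul_add_sum_of_le_mul_add {a b : ℕ → ℝ} {lam : ℝ} (hlam : 0 ≤ lam)
    (h : ∀ s, a (s + 1) ≤ lam * a s + b (s + 1)) (t : ℕ) :
    a t ≤ lam ^ t * a 0 + ∑ q ∈ Icc 1 t, lam ^ (t - q) * b q := by
  induction t with
  | zero => simp
  | succ s ih =>
    have hsum : ∑ q ∈ Icc 1 (s + 1), lam ^ (s + 1 - q) * b q
        = lam * ∑ q ∈ Icc 1 s, lam ^ (s - q) * b q + b (s + 1) := by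
      rw [sum_Icc_succ_top (by omega), Nat.sub_self, pow_zero, one_mul, mul_sum]
      congr 1
      refine sum_congr rfl fun q hq => ?_
      rw [show s + 1 - q = s - q + 1 by have := (mem_Icc.mp hq).2; omega, pow_succ]
      ring
    rw [hsum, pow_succ]
    nlinarith [h s, mul_le_mul_of_nonneg_left ih hlam]

end DecentralizedSGD

open DecentralizedSGD in
theorem stmt_4_general (d m n : ℕ)
    {Z : Type*} (f : EuclideanSpace ℝ (Fin d) → Z → ℝ)
    (L : ℝ) (hL : 0 < L)
    (hgrad : ∀ (z : Z) (w : EuclideanSpace ℝ (Fin d)),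
      ‖gradient (fun w' => f w' z) w‖ ≤ L)
    (P : Fin m → Fin m → ℝ)
    (hPsymm : ∀ i l, P i l = P l i)
    (hProw : ∀ i, ∑ l, P i l = 1)
    (lam : ℝ) (hlam0 : 0 ≤ lam)
    (hcons : ∀ x : Fin m → EuclideanSpace ℝ (Fin d), ∑ i, x i = 0 →
      ∑ i, ‖∑ l, P i l • x l‖ ^ 2 ≤ lam ^ 2 * ∑ i, ‖x i‖ ^ 2)
    (S : Fin m → Fin n → Z) (j : ℕ → Fin m → Fin n)
    (η : ℕ → ℝ) (hη : ∀ t, 0 ≤ η t)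
    (w0 : EuclideanSpace ℝ (Fin d))
    (wS : ℕ → Fin m → EuclideanSpace ℝ (Fin d))
    (hwS0 : ∀ i, wS 0 i = w0)
    (hwSrec : ∀ t i, wS (t + 1) i =
      (∑ l, P i l • wS t l) -
        η (t + 1) • gradient (fun w => f w (S i (j (t + 1) i))) (wS t i))
    (t : ℕ) :
    Real.sqrt (∑ i, ‖((m : ℝ)⁻¹ • ∑ i', wS t i') - wS t i‖ ^ 2)
      ≤ 2 * Real.sqrt (m : ℝ) * L * ∑ q ∈ Finset.Icc 1 t, η q * lam ^ (t - q) := by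
  have hcol : ∀ l, ∑ i, P i l = 1 := fun l => by simpa only [hPsymm] using hProw l
  have hstep : ∀ s, consensusDist (wS (s + 1)) ≤
      lam * consensusDist (wS s) + η (s + 1) * (2 * √(m : ℝ) * L) := fun s => by
    rw [funext (hwSrec s)]
    simpa using consensusDist_gossip_step_le hProw hcol hlam0 hcons (wS s) _ (hη _) hL.le
      fun i => hgrad _ _
  have hstart : consensusDist (wS 0) = 0 := by
    rw [funext hwS0]
    exact consensusDist_const w0
  calc _ = consensusDist (wS t) := by simp [consensusDist, average]
    _ ≤ lam ^ t * consensusDist (wS 0) +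
          ∑ q ∈ Icc 1 t, lam ^ (t - q) * (η q * (2 * √(m : ℝ) * L)) :=
        le_pow_mul_add_sum_of_le_mul_add (a := fun s => consensusDist (wS s)) hlam0 hstep t
    _ = _ := by
        rw [hstart, mul_zero, zero_add, mul_sum]
        exact sum_congr rfl fun q _ => by ring

theorem stmt_4 (d m n : ℕ) (hd : 1 ≤ d) (hm : 1 ≤ m) (hn : 1 ≤ n)
    {Z : Type*} (f : EuclideanSpace ℝ (Fin d) → Z → ℝ)
    (L : ℝ) (hL : 0 < L)
    (hdiff : ∀ z : Z, Differentiable ℝ (fun w => f w z))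
    (hgrad : ∀ (z : Z) (w : EuclideanSpace ℝ (Fin d)),
      ‖gradient (fun w' => f w' z) w‖ ≤ L)
    (P : Fin m → Fin m → ℝ)
    (hPsymm : ∀ i l, P i l = P l i)
    (hPnonneg : ∀ i l, 0 ≤ P i l)
    (hProw : ∀ i, ∑ l, P i l = 1)
    (lam : ℝ) (hlam0 : 0 ≤ lam) (hlam1 : lam < 1)
    (hcons : ∀ x : Fin m → EuclideanSpace ℝ (Fin d), ∑ i, x i = 0 →
      ∑ i, ‖∑ l, P i l • x l‖ ^ 2 ≤ lam ^ 2 * ∑ i, ‖x i‖ ^ 2)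
    (S : Fin m → Fin n → Z) (j : ℕ → Fin m → Fin n)
    (η : ℕ → ℝ) (hη : ∀ t, 0 ≤ η t)
    (w0 : EuclideanSpace ℝ (Fin d))
    (wS : ℕ → Fin m → EuclideanSpace ℝ (Fin d))
    (hwS0 : ∀ i, wS 0 i = w0)
    (hwSrec : ∀ t i, wS (t + 1) i =
      (∑ l, P i l • wS t l) -
        η (t + 1) • gradient (fun w => f w (S i (j (t + 1) i))) (wS t i))
    (t : ℕ) :
    Real.sqrt (∑ i, ‖((m : ℝ)⁻¹ • ∑ i', wS t i') - wS t i‖ ^ 2)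
      ≤ 2 * Real.sqrt (m : ℝ) * L * ∑ q ∈ Finset.Icc 1 t, η q * lam ^ (t - q) :=
  stmt_4_general d m n f L hL hgrad P hPsymm hProw lam hlam0 hcons S j η hη w0 wS hwS0 hwSrec t
end

section
/- Assume for every z that f_z is convex and differentiable with ‖∇f_z w‖ ≤ L for all w (L > 0), and that λ ∈ [0,1) is a consensus rate for P (no smoothness is assumed and no stepsize restriction is imposed). Then for every T ≥ 1, (1/(m*n)) * ∑_{r : Fin m} ∑_{k : Fin n} ‖w̄_S T - w̄_{S_{rk}} T‖ ≤ 2*L*Real.sqrt(∑_{t=1}^{T} (η t)^2) + 4*L*Real.sqrt(∑_{t=1}^{T} η t * ∑_{q=1}^{t-1} η q * λ^(t-q-1)) + (4*L/(m*n)) * ∑_{t=1}^{T} η t. -/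
open Finset

noncomputable section

lemma aux_first_order {E : Type*} [NormedAddCommGroup E] [InnerProductSpace ℝ E] [CompleteSpace E]
    {g : E → ℝ} (hc : ConvexOn ℝ Set.univ g) (hd : Differentiable ℝ g) (x y : E) :
    (inner ℝ (gradient g x) (y - x) : ℝ) ≤ g y - g x := by
  set φ : ℝ → ℝ := fun s => g (s • (y - x) + x) with hφ
  have hmap : HasDerivAt (fun s : ℝ => s • (y - x) + x) (y - x) 0 := by
    simpa using ((hasDerivAt_id (0:ℝ)).smul_const (y - x)).add_const x
  have hgx : HasFDerivAt g (InnerProductSpace.toDual ℝ E (gradient g x)) x :=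
    (hd x).hasGradientAt.hasFDerivAt
  have hgx' : HasFDerivAt g (InnerProductSpace.toDual ℝ E (gradient g x))
      ((fun s : ℝ => s • (y - x) + x) 0) := by simpa using hgx
  have hderiv : HasDerivAt φ ((inner ℝ (gradient g x) (y - x) : ℝ)) 0 := by
    have := hgx'.comp_hasDerivAt 0 hmap
    simpa [φ, Function.comp_def, InnerProductSpace.toDual_apply_apply] using this
  have hφc : ConvexOn ℝ Set.univ φ := by
    have := hc.comp_affineMap (AffineMap.lineMap x y : ℝ →ᵃ[ℝ] E)
    simpa [φ, Function.comp_def, AffineMap.lineMap_apply_module'] using this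
  have hs := hφc.le_slope_of_hasDerivAt (Set.mem_univ (0:ℝ)) (Set.mem_univ (1:ℝ))
    zero_lt_one hderiv
  rw [slope_def_field] at hs
  simpa [φ] using hs

lemma aux_grad_mono {E : Type*} [NormedAddCommGroup E] [InnerProductSpace ℝ E] [CompleteSpace E]
    {g : E → ℝ} (hc : ConvexOn ℝ Set.univ g) (hd : Differentiable ℝ g) (x y : E) :
    0 ≤ (inner ℝ (gradient g x - gradient g y) (x - y) : ℝ) := by
  have h1 := aux_first_order hc hd x y
  have h2 := aux_first_order hc hd y x
  have e1 : (inner ℝ (gradient g x) (y - x) : ℝ) = -(inner ℝ (gradient g x) (x - y) : ℝ) := by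
    rw [← inner_neg_right, neg_sub]
  rw [inner_sub_left]
  rw [e1] at h1
  linarith

lemma aux_sqrt_rec (a c h : ℕ → ℝ) (ha : ∀ t, 0 ≤ a t) (hc : ∀ t, 0 ≤ c t)
    (hh : ∀ t, 0 ≤ h t) (ha0 : a 0 = 0)
    (hrec : ∀ t, a (t + 1) ^ 2 ≤ a t ^ 2 + c (t + 1) + h (t + 1) * a t) :
    ∀ T, a T ≤ Real.sqrt (∑ t ∈ Finset.Icc 1 T, c t) + ∑ t ∈ Finset.Icc 1 T, h t := by
  intro T
  induction T with
  | zero => simp [ha0]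
  | succ T ih =>
    set C := ∑ t ∈ Finset.Icc 1 T, c t with hC
    set H := ∑ t ∈ Finset.Icc 1 T, h t with hH
    have hCnn : 0 ≤ C := Finset.sum_nonneg fun t _ => hc t
    have hHnn : 0 ≤ H := Finset.sum_nonneg fun t _ => hh t
    have hsum_c : ∑ t ∈ Finset.Icc 1 (T + 1), c t = C + c (T + 1) := by
      rw [Finset.sum_Icc_succ_top (by omega)]
    have hsum_h : ∑ t ∈ Finset.Icc 1 (T + 1), h t = H + h (T + 1) := by
      rw [Finset.sum_Icc_succ_top (by omega)]
    rw [hsum_c, hsum_h]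
    have hsC : Real.sqrt C ^ 2 = C := Real.sq_sqrt hCnn
    have hsCc : Real.sqrt (C + c (T + 1)) ^ 2 = C + c (T + 1) :=
      Real.sq_sqrt (by have := hc (T + 1); linarith)
    have hmono : Real.sqrt C ≤ Real.sqrt (C + c (T + 1)) :=
      Real.sqrt_le_sqrt (by linarith [hc (T + 1)])
    have key : a (T + 1) ^ 2 ≤ (Real.sqrt (C + c (T + 1)) + (H + h (T + 1))) ^ 2 := by
      have h1 := hrec T
      have h2 : a T ^ 2 ≤ (Real.sqrt C + H) ^ 2 := by
        nlinarith [ha T, Real.sqrt_nonneg C]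
      have h3 : h (T + 1) * a T ≤ h (T + 1) * (Real.sqrt C + H) :=
        mul_le_mul_of_nonneg_left ih (hh (T + 1))
      nlinarith [Real.sqrt_nonneg C, Real.sqrt_nonneg (C + c (T + 1)), hh (T + 1), hc (T + 1)]
    calc a (T + 1) = Real.sqrt (a (T + 1) ^ 2) := (Real.sqrt_sq (ha (T + 1))).symm
      _ ≤ Real.sqrt ((Real.sqrt (C + c (T + 1)) + (H + h (T + 1))) ^ 2) :=
          Real.sqrt_le_sqrt key
      _ = Real.sqrt (C + c (T + 1)) + (H + h (T + 1)) := by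
          rw [Real.sqrt_sq (by
            have := Real.sqrt_nonneg (C + c (T + 1))
            have := hh (T + 1)
            linarith)]

lemma aux_var {E : Type*} [NormedAddCommGroup E] [InnerProductSpace ℝ E]
    {m : ℕ} (hm : 1 ≤ m) (x : Fin m → E) :
    ∑ i, ‖x i - (m : ℝ)⁻¹ • ∑ i', x i'‖ ^ 2 ≤ ∑ i, ‖x i‖ ^ 2 := by
  have hm0 : ((m : ℝ)) ≠ 0 := Nat.cast_ne_zero.2 (by omega)
  set xb : E := (m : ℝ)⁻¹ • ∑ i', x i' with hxb
  have hsum : ∑ i', x i' = (m : ℝ) • xb := by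
    rw [hxb, smul_smul, mul_inv_cancel₀ hm0, one_smul]
  have expand : ∀ i, ‖x i - xb‖ ^ 2 = ‖x i‖ ^ 2 - 2 * (inner ℝ (x i) xb : ℝ) + ‖xb‖ ^ 2 :=
    fun i => norm_sub_sq_real (x i) xb
  have hinnersum : ∑ i, (inner ℝ (x i) xb : ℝ) = (m : ℝ) * ‖xb‖ ^ 2 := by
    rw [← sum_inner, hsum, real_inner_smul_left, real_inner_self_eq_norm_sq]
  calc ∑ i, ‖x i - xb‖ ^ 2
      = ∑ i, ‖x i‖ ^ 2 - 2 * ((m : ℝ) * ‖xb‖ ^ 2) + (m : ℝ) * ‖xb‖ ^ 2 := by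
        simp only [expand]
        rw [Finset.sum_add_distrib, Finset.sum_sub_distrib, ← Finset.mul_sum, hinnersum,
          Finset.sum_const, Finset.card_univ, Fintype.card_fin, nsmul_eq_mul]
    _ ≤ ∑ i, ‖x i‖ ^ 2 := by
        have h1 : 0 ≤ (m : ℝ) * ‖xb‖ ^ 2 := by positivity
        linarith

set_option maxHeartbeats 2000000 in
lemma aux_pair (d m n : ℕ) (hm : 1 ≤ m)
    {Z : Type*} (f : EuclideanSpace ℝ (Fin d) → Z → ℝ)
    (L : ℝ) (hL : 0 < L)
    (hconv : ∀ z : Z, ConvexOn ℝ Set.univ (fun w => f w z))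
    (hdiff : ∀ z : Z, Differentiable ℝ (fun w => f w z))
    (hgrad : ∀ (z : Z) (w : EuclideanSpace ℝ (Fin d)),
      ‖gradient (fun w' => f w' z) w‖ ≤ L)
    (P : Fin m → Fin m → ℝ)
    (hPsymm : ∀ i l, P i l = P l i)
    (hProw : ∀ i, ∑ l, P i l = 1)
    (lam : ℝ) (hlam0 : 0 ≤ lam)
    (hcons : ∀ x : Fin m → EuclideanSpace ℝ (Fin d), ∑ i, x i = 0 →
      ∑ i, ‖∑ l, P i l • x l‖ ^ 2 ≤ lam ^ 2 * ∑ i, ‖x i‖ ^ 2)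
    (S : Fin m → Fin n → Z) (S' : Fin m → Fin n → Z) (j : ℕ → Fin m → Fin n)
    (η : ℕ → ℝ) (hη : ∀ t, 0 ≤ η t)
    (w0 : EuclideanSpace ℝ (Fin d))
    (wS : ℕ → Fin m → EuclideanSpace ℝ (Fin d))
    (hwS0 : ∀ i, wS 0 i = w0)
    (hwSrec : ∀ t i, wS (t + 1) i =
      (∑ l, P i l • wS t l) -
        η (t + 1) • gradient (fun w => f w (S i (j (t + 1) i))) (wS t i))
    (r : Fin m) (k : Fin n)
    (w' : ℕ → Fin m → EuclideanSpace ℝ (Fin d))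
    (hw'0 : ∀ i, w' 0 i = w0)
    (hw'rec : ∀ t i, w' (t + 1) i =
      (∑ l, P i l • w' t l) -
        η (t + 1) • gradient
          (fun w => f w (if i = r ∧ j (t + 1) i = k then S' r k
            else S i (j (t + 1) i))) (w' t i))
    (T : ℕ) :
    ‖((m : ℝ)⁻¹ • ∑ i, wS T i) - ((m : ℝ)⁻¹ • ∑ i, w' T i)‖
      ≤ 2 * L * Real.sqrt (∑ t ∈ Finset.Icc 1 T, (η t) ^ 2)
        + 4 * L * Real.sqrt (∑ t ∈ Finset.Icc 1 T,
            η t * ∑ q ∈ Finset.Icc 1 (t - 1), η q * lam ^ (t - q - 1))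
        + (4 * L / m) * ∑ t ∈ Finset.Icc 1 T,
            η t * (if j t r = k then (1:ℝ) else 0) := by
  have hm0 : ((m : ℝ)) ≠ 0 := Nat.cast_ne_zero.2 (by omega)
  have hmpos : (0 : ℝ) < m := by
    have : (0:ℕ) < m := by omega
    exact_mod_cast this
  set Δ : ℕ → Fin m → EuclideanSpace ℝ (Fin d) := fun t i => wS t i - w' t i with hΔdef
  set Db : ℕ → EuclideanSpace ℝ (Fin d) := fun t => (m : ℝ)⁻¹ • ∑ i, Δ t i with hDbdef
  set yy : ℕ → Fin m → EuclideanSpace ℝ (Fin d) := fun t i => Δ t i - Db t with hyydef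
  set a : ℕ → ℝ := fun t => ‖Db t‖ with hadef
  set dg : ℕ → Fin m → EuclideanSpace ℝ (Fin d) := fun t i =>
    gradient (fun w => f w (S i (j (t + 1) i))) (wS t i) -
      gradient (fun w => f w (if i = r ∧ j (t + 1) i = k then S' r k
        else S i (j (t + 1) i))) (w' t i) with hdgdef
  have hcol : ∀ l, ∑ i, P i l = 1 := by
    intro l
    rw [Finset.sum_congr rfl fun i _ => hPsymm i l]
    exact hProw l
  have hdgnorm : ∀ t i, ‖dg t i‖ ≤ 2 * L := by
    intro t i
    refine le_trans (norm_sub_le _ _) ?_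
    have h1 := hgrad (S i (j (t + 1) i)) (wS t i)
    have h2 := hgrad (if i = r ∧ j (t + 1) i = k then S' r k else S i (j (t + 1) i)) (w' t i)
    linarith
  have hΔ0 : ∀ i, Δ 0 i = 0 := by
    intro i; simp [hΔdef, hwS0, hw'0]
  have hΔrec : ∀ t i, Δ (t + 1) i = (∑ l, P i l • Δ t l) - η (t + 1) • dg t i := by
    intro t i
    have e1 : ∑ x, (P i x • wS t x - P i x • w' t x) =
        (∑ x, P i x • wS t x) - ∑ x, P i x • w' t x := Finset.sum_sub_distrib _ _
    simp only [hΔdef, hdgdef, hwSrec, hw'rec, smul_sub]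
    rw [e1]
    abel
  have hDbrec : ∀ t, Db (t + 1) = Db t - ((m : ℝ)⁻¹ * η (t + 1)) • (∑ i, dg t i) := by
    intro t
    have h1 : ∑ i, Δ (t + 1) i = (∑ i, Δ t i) - η (t + 1) • ∑ i, dg t i := by
      calc ∑ i, Δ (t + 1) i
          = ∑ i, ((∑ l, P i l • Δ t l) - η (t + 1) • dg t i) :=
            Finset.sum_congr rfl fun i _ => hΔrec t i
        _ = (∑ i, ∑ l, P i l • Δ t l) - (∑ i, η (t + 1) • dg t i) := Finset.sum_sub_distrib _ _
        _ = (∑ i, Δ t i) - η (t + 1) • ∑ i, dg t i := by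
            rw [Finset.sum_comm, ← Finset.smul_sum]
            congr 1
            refine Finset.sum_congr rfl fun l _ => ?_
            rw [← Finset.sum_smul, hcol l, one_smul]
    simp only [hDbdef, h1, smul_sub, smul_smul]
  have hsumy : ∀ t, ∑ i, yy t i = 0 := by
    intro t
    have hs : (m • Db t : EuclideanSpace ℝ (Fin d)) = (m : ℝ) • Db t :=
      (Nat.cast_smul_eq_nsmul ℝ m (Db t)).symm
    simp only [hyydef]
    rw [Finset.sum_sub_distrib, Finset.sum_const, Finset.card_univ, Fintype.card_fin, hs]
    simp only [hDbdef]
    rw [smul_smul, mul_inv_cancel₀ hm0, one_smul, sub_self]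
  have hyrec : ∀ t i, yy (t + 1) i = (∑ l, P i l • yy t l) -
      η (t + 1) • (dg t i - (m : ℝ)⁻¹ • ∑ i', dg t i') := by
    intro t i
    have hPy : ∑ l, P i l • yy t l = (∑ l, P i l • Δ t l) - Db t := by
      simp only [hyydef, smul_sub]
      rw [Finset.sum_sub_distrib, ← Finset.sum_smul, hProw i, one_smul]
    rw [hPy]
    simp only [hyydef]
    rw [hΔrec t i, hDbrec t]
    module
  clear_value dg
  -- Frobenius norm machinery
  set V : (Fin m → EuclideanSpace ℝ (Fin d)) ≃ₗ[ℝ]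
      PiLp 2 (fun _ : Fin m => EuclideanSpace ℝ (Fin d)) :=
    (WithLp.linearEquiv 2 ℝ (Fin m → EuclideanSpace ℝ (Fin d))).symm with hVdef
  have hVnorm : ∀ x : Fin m → EuclideanSpace ℝ (Fin d),
      ‖V x‖ = Real.sqrt (∑ i, ‖x i‖ ^ 2) := by
    intro x
    exact PiLp.norm_eq_of_L2 (V x)
  set q : ℕ → ℝ := fun t => ‖V (yy t)‖ with hqdef
  have hq0 : q 0 = 0 := by
    have hy0 : yy 0 = 0 := by
      funext i
      simp only [hyydef, hDbdef]
      simp [hΔ0]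
    simp [hqdef, hy0]
  have hqrec : ∀ t, q (t + 1) ≤ lam * q t + (2 * L * Real.sqrt m) * η (t + 1) := by
    intro t
    have hsplit : V (yy (t + 1)) = V (fun i => ∑ l, P i l • yy t l)
        - η (t + 1) • V (fun i => dg t i - (m : ℝ)⁻¹ • ∑ i', dg t i') := by
      rw [← map_smul, ← map_sub]
      congr 1
      funext i
      simp only [Pi.sub_apply, Pi.smul_apply]
      exact hyrec t i
    have hA : ‖V (fun i => ∑ l, P i l • yy t l)‖ ≤ lam * q t := by
      rw [hVnorm]
      have h1 := hcons (yy t) (hsumy t)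
      have h2 : Real.sqrt (∑ i, ‖∑ l, P i l • yy t l‖ ^ 2)
          ≤ Real.sqrt (lam ^ 2 * ∑ i, ‖yy t i‖ ^ 2) := Real.sqrt_le_sqrt h1
      rw [Real.sqrt_mul (sq_nonneg lam), Real.sqrt_sq hlam0] at h2
      simp only [hqdef]
      rw [hVnorm]
      exact h2
    have hB : ‖η (t + 1) • V (fun i => dg t i - (m : ℝ)⁻¹ • ∑ i', dg t i')‖
        ≤ (2 * L * Real.sqrt m) * η (t + 1) := by
      rw [norm_smul, Real.norm_eq_abs, abs_of_nonneg (hη _)]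
      have h2 : ‖V (fun i => dg t i - (m : ℝ)⁻¹ • ∑ i', dg t i')‖
          ≤ Real.sqrt ((m : ℝ) * (2 * L) ^ 2) := by
        rw [hVnorm]
        apply Real.sqrt_le_sqrt
        calc ∑ i, ‖dg t i - (m : ℝ)⁻¹ • ∑ i', dg t i'‖ ^ 2
            ≤ ∑ i, ‖dg t i‖ ^ 2 := aux_var hm (dg t)
          _ ≤ ∑ _i : Fin m, (2 * L) ^ 2 := by
              refine Finset.sum_le_sum fun i _ => ?_
              have h3 := hdgnorm t i
              have h4 := norm_nonneg (dg t i)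
              nlinarith
          _ = (m : ℝ) * (2 * L) ^ 2 := by
              rw [Finset.sum_const, Finset.card_univ, Fintype.card_fin, nsmul_eq_mul]
      rw [Real.sqrt_mul (Nat.cast_nonneg m), Real.sqrt_sq (by positivity)] at h2
      calc η (t + 1) * ‖V (fun i => dg t i - (m : ℝ)⁻¹ • ∑ i', dg t i')‖
          ≤ η (t + 1) * (Real.sqrt m * (2 * L)) :=
            mul_le_mul_of_nonneg_left h2 (hη _)
        _ = (2 * L * Real.sqrt m) * η (t + 1) := by ring
    calc q (t + 1) = ‖V (yy (t + 1))‖ := rfl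
      _ ≤ ‖V (fun i => ∑ l, P i l • yy t l)‖
          + ‖η (t + 1) • V (fun i => dg t i - (m : ℝ)⁻¹ • ∑ i', dg t i')‖ := by
          rw [hsplit]; exact norm_sub_le _ _
      _ ≤ lam * q t + (2 * L * Real.sqrt m) * η (t + 1) := add_le_add hA hB
  have hqnn : ∀ t, 0 ≤ q t := fun t => norm_nonneg _
  have hqbound : ∀ t, q t ≤ (2 * L * Real.sqrt m) *
      ∑ s ∈ Finset.Icc 1 t, η s * lam ^ (t - s) := by
    intro t
    induction t with
    | zero => simp [hq0]
    | succ t ih =>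
      have h1 := hqrec t
      have h3 : lam * ∑ s ∈ Finset.Icc 1 t, η s * lam ^ (t - s)
          = ∑ s ∈ Finset.Icc 1 t, η s * lam ^ (t + 1 - s) := by
        rw [Finset.mul_sum]
        refine Finset.sum_congr rfl fun s hs => ?_
        have hs' : s ≤ t := (Finset.mem_Icc.mp hs).2
        have he : t + 1 - s = (t - s) + 1 := by omega
        rw [he, pow_succ]; ring
      have h2 : lam * q t ≤ (2 * L * Real.sqrt m) *
          ∑ s ∈ Finset.Icc 1 t, η s * lam ^ (t + 1 - s) := by
        calc lam * q t ≤ lam * ((2 * L * Real.sqrt m) *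
              ∑ s ∈ Finset.Icc 1 t, η s * lam ^ (t - s)) :=
              mul_le_mul_of_nonneg_left ih hlam0
          _ = (2 * L * Real.sqrt m) * (lam * ∑ s ∈ Finset.Icc 1 t, η s * lam ^ (t - s)) := by
              ring
          _ = _ := by rw [h3]
      rw [Finset.sum_Icc_succ_top (by omega : 1 ≤ t + 1), Nat.sub_self, pow_zero, mul_one,
        mul_add]
      linarith
  have hCy : ∀ t, ∑ i, ‖yy t i‖ ≤ Real.sqrt m * q t := by
    intro t
    have h1 : (∑ i, ‖yy t i‖) ^ 2 ≤ (m : ℝ) * ∑ i, ‖yy t i‖ ^ 2 := by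
      have := sq_sum_le_card_mul_sum_sq (s := (Finset.univ : Finset (Fin m)))
        (f := fun i => ‖yy t i‖)
      simpa using this
    have h2 : ∑ i, ‖yy t i‖ ≤ Real.sqrt ((m : ℝ) * ∑ i, ‖yy t i‖ ^ 2) := by
      rw [← Real.sqrt_sq (Finset.sum_nonneg fun i _ => norm_nonneg _)]
      exact Real.sqrt_le_sqrt h1
    rw [Real.sqrt_mul (Nat.cast_nonneg m)] at h2
    simp only [hqdef]
    rw [hVnorm]
    exact h2
  -- step inequality for the network average
  set χ : ℕ → ℝ := fun t => if j t r = k then 1 else 0 with hχdef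
  set cc : ℕ → ℝ := fun t => 4 * L ^ 2 * (η t) ^ 2
    + 8 * L ^ 2 * η t * ∑ s ∈ Finset.Icc 1 (t - 1), η s * lam ^ (t - 1 - s) with hccdef
  set hh : ℕ → ℝ := fun t => (4 * L / m) * η t * χ t with hhhdef
  have harec : ∀ t, a (t + 1) ^ 2 ≤ a t ^ 2 + cc (t + 1) + hh (t + 1) * a t := by
    intro t
    set G : EuclideanSpace ℝ (Fin d) := ∑ i, dg t i with hGdef
    have hGnorm : ‖G‖ ≤ (m : ℝ) * (2 * L) := by
      calc ‖G‖ ≤ ∑ i, ‖dg t i‖ := norm_sum_le _ _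
        _ ≤ ∑ _i : Fin m, 2 * L := Finset.sum_le_sum fun i _ => hdgnorm t i
        _ = (m : ℝ) * (2 * L) := by
            rw [Finset.sum_const, Finset.card_univ, Fintype.card_fin, nsmul_eq_mul]
    have hδsum : ∑ i, (if i = r ∧ j (t + 1) i = k then (1:ℝ) else 0) = χ (t + 1) := by
      have he : ∀ i, (if i = r ∧ j (t + 1) i = k then (1:ℝ) else 0)
          = if i = r then χ (t + 1) else 0 := by
        intro i
        by_cases hi : i = r
        · subst hi
          by_cases hj : j (t + 1) i = k <;> simp [hj, hχdef]
        · simp [hi]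
      rw [Finset.sum_congr rfl fun i _ => he i, Finset.sum_ite_eq' Finset.univ r,
        if_pos (Finset.mem_univ r)]
    have hterm : ∀ i, -(2 * L) * ‖yy t i‖
        - (2 * L) * (if i = r ∧ j (t + 1) i = k then (1:ℝ) else 0) * a t
        ≤ (inner ℝ (Db t) (dg t i) : ℝ) := by
      intro i
      set z := S i (j (t + 1) i) with hzdef
      set Mi : EuclideanSpace ℝ (Fin d) :=
        gradient (fun w => f w z) (wS t i) - gradient (fun w => f w z) (w' t i) with hMidef
      set Ei : EuclideanSpace ℝ (Fin d) :=
        gradient (fun w => f w z) (w' t i) -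
          gradient (fun w => f w (if i = r ∧ j (t + 1) i = k then S' r k else z)) (w' t i)
        with hEidef
      have hdecomp : dg t i = Mi + Ei := by
        simp only [hdgdef, hMidef, hEidef, hzdef]
        abel
      have h1 : 0 ≤ (inner ℝ (Δ t i) Mi : ℝ) := by
        have h := aux_grad_mono (hconv z) (hdiff z) (wS t i) (w' t i)
        rw [real_inner_comm] at h
        exact h
      have hMnorm : ‖Mi‖ ≤ 2 * L := by
        refine le_trans (norm_sub_le _ _) ?_
        have := hgrad z (wS t i)
        have := hgrad z (w' t i)
        linarith
      have h2 : (inner ℝ (yy t i) Mi : ℝ) ≤ ‖yy t i‖ * (2 * L) := by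
        calc (inner ℝ (yy t i) Mi : ℝ) ≤ ‖yy t i‖ * ‖Mi‖ := real_inner_le_norm _ _
          _ ≤ ‖yy t i‖ * (2 * L) := mul_le_mul_of_nonneg_left hMnorm (norm_nonneg _)
      have h3 : -((2 * L) * (if i = r ∧ j (t + 1) i = k then (1:ℝ) else 0) * a t)
          ≤ (inner ℝ (Db t) Ei : ℝ) := by
        by_cases hcond : i = r ∧ j (t + 1) i = k
        · have hE : ‖Ei‖ ≤ 2 * L := by
            simp only [hEidef, if_pos hcond]
            refine le_trans (norm_sub_le _ _) ?_
            have := hgrad z (w' t i)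
            have := hgrad (S' r k) (w' t i)
            linarith
          rw [if_pos hcond, mul_one]
          have h4 := abs_real_inner_le_norm (Db t) Ei
          have h5 : ‖Db t‖ * ‖Ei‖ ≤ a t * (2 * L) := by
            simp only [hadef]
            exact mul_le_mul_of_nonneg_left hE (norm_nonneg _)
          have h6 := neg_abs_le (inner ℝ (Db t) Ei : ℝ)
          have h7 : a t * (2 * L) = 2 * L * a t := by ring
          nlinarith
        · have hE : Ei = 0 := by
            simp only [hEidef, if_neg hcond, sub_self]
          rw [if_neg hcond, hE, inner_zero_right]
          simp
      have hDb : Db t = Δ t i - yy t i := by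
        simp only [hyydef]
        abel
      have hexp : (inner ℝ (Db t) (dg t i) : ℝ)
          = (inner ℝ (Δ t i) Mi : ℝ) - (inner ℝ (yy t i) Mi : ℝ) + (inner ℝ (Db t) Ei : ℝ) := by
        rw [hdecomp, inner_add_right]
        congr 1
        rw [hDb, inner_sub_left]
      rw [hexp]
      linarith
    have hinner : -(2 * L) * (∑ i, ‖yy t i‖) - (2 * L) * χ (t + 1) * a t
        ≤ (inner ℝ (Db t) G : ℝ) := by
      rw [hGdef, inner_sum]
      calc -(2 * L) * (∑ i, ‖yy t i‖) - (2 * L) * χ (t + 1) * a t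
          = ∑ i, (-(2 * L) * ‖yy t i‖
              - (2 * L) * (if i = r ∧ j (t + 1) i = k then (1:ℝ) else 0) * a t) := by
            rw [Finset.sum_sub_distrib, ← Finset.mul_sum, ← Finset.sum_mul, ← Finset.mul_sum,
              hδsum]
        _ ≤ ∑ i, (inner ℝ (Db t) (dg t i) : ℝ) := Finset.sum_le_sum fun i _ => hterm i
    have hsq : a (t + 1) ^ 2 = a t ^ 2
        - 2 * ((m : ℝ)⁻¹ * η (t + 1)) * (inner ℝ (Db t) G : ℝ)
        + ((m : ℝ)⁻¹ * η (t + 1)) ^ 2 * ‖G‖ ^ 2 := by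
      have hcnn0 : (0:ℝ) ≤ (m : ℝ)⁻¹ * η (t + 1) :=
        mul_nonneg (inv_nonneg.2 hmpos.le) (hη _)
      have e0 : Db (t + 1) = Db t - ((m : ℝ)⁻¹ * η (t + 1)) • G := by
        rw [hDbrec t, hGdef]
      have e1 : (inner ℝ (Db t) (((m : ℝ)⁻¹ * η (t + 1)) • G) : ℝ)
          = ((m : ℝ)⁻¹ * η (t + 1)) * (inner ℝ (Db t) G : ℝ) :=
        real_inner_smul_right _ _ _
      have e2 : ‖((m : ℝ)⁻¹ * η (t + 1)) • G‖ ^ 2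
          = ((m : ℝ)⁻¹ * η (t + 1)) ^ 2 * ‖G‖ ^ 2 := by
        rw [norm_smul, Real.norm_eq_abs, abs_of_nonneg hcnn0, mul_pow]
      simp only [hadef]
      rw [e0, norm_sub_sq_real, e1, e2]
      ring
    -- combine
    have hcnn : 0 ≤ (m : ℝ)⁻¹ * η (t + 1) :=
      mul_nonneg (inv_nonneg.2 hmpos.le) (hη _)
    have hSig : ∑ i, ‖yy t i‖ ≤ 2 * L * (m : ℝ) *
        ∑ s ∈ Finset.Icc 1 t, η s * lam ^ (t - s) := by
      have h1 := le_trans (hCy t)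
        (mul_le_mul_of_nonneg_left (hqbound t) (Real.sqrt_nonneg m))
      have h2 : Real.sqrt m * ((2 * L * Real.sqrt m) *
          ∑ s ∈ Finset.Icc 1 t, η s * lam ^ (t - s))
          = 2 * L * (Real.sqrt m * Real.sqrt m) *
            ∑ s ∈ Finset.Icc 1 t, η s * lam ^ (t - s) := by ring
      rw [h2, Real.mul_self_sqrt (Nat.cast_nonneg m)] at h1
      exact h1
    have hSignn : 0 ≤ ∑ s ∈ Finset.Icc 1 t, η s * lam ^ (t - s) :=
      Finset.sum_nonneg fun s _ => mul_nonneg (hη s) (pow_nonneg hlam0 _)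
    have hccval : cc (t + 1) = 4 * L ^ 2 * (η (t + 1)) ^ 2
        + 8 * L ^ 2 * η (t + 1) * ∑ s ∈ Finset.Icc 1 t, η s * lam ^ (t - s) := by
      simp only [hccdef, Nat.add_sub_cancel]
    have hhhval : hh (t + 1) = (4 * L / m) * η (t + 1) * χ (t + 1) := rfl
    have tm1 : -(2 * ((m : ℝ)⁻¹ * η (t + 1))) * (inner ℝ (Db t) G : ℝ)
        ≤ 2 * ((m : ℝ)⁻¹ * η (t + 1)) *
          ((2 * L) * (∑ i, ‖yy t i‖) + (2 * L) * χ (t + 1) * a t) := by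
      nlinarith [hinner, hcnn]
    have tm2 : 2 * ((m : ℝ)⁻¹ * η (t + 1)) * ((2 * L) * (∑ i, ‖yy t i‖))
        ≤ 8 * L ^ 2 * η (t + 1) * ∑ s ∈ Finset.Icc 1 t, η s * lam ^ (t - s) := by
      have h1 : 2 * ((m : ℝ)⁻¹ * η (t + 1)) * ((2 * L) * (∑ i, ‖yy t i‖))
          ≤ 2 * ((m : ℝ)⁻¹ * η (t + 1)) * ((2 * L) * (2 * L * (m : ℝ) *
            ∑ s ∈ Finset.Icc 1 t, η s * lam ^ (t - s))) := by
        have := mul_le_mul_of_nonneg_left hSig (le_of_lt hL)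
        nlinarith [hcnn]
      have h2 : 2 * ((m : ℝ)⁻¹ * η (t + 1)) * ((2 * L) * (2 * L * (m : ℝ) *
            ∑ s ∈ Finset.Icc 1 t, η s * lam ^ (t - s)))
          = 8 * L ^ 2 * η (t + 1) * (∑ s ∈ Finset.Icc 1 t, η s * lam ^ (t - s))
            * ((m : ℝ)⁻¹ * (m : ℝ)) := by ring
      rw [h2, inv_mul_cancel₀ hm0, mul_one] at h1
      exact h1
    have tm3 : 2 * ((m : ℝ)⁻¹ * η (t + 1)) * ((2 * L) * χ (t + 1) * a t)
        = hh (t + 1) * a t := by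
      rw [hhhval]
      field_simp
      ring
    have tm4 : ((m : ℝ)⁻¹ * η (t + 1)) ^ 2 * ‖G‖ ^ 2 ≤ 4 * L ^ 2 * (η (t + 1)) ^ 2 := by
      have hGnn := norm_nonneg G
      have h1 : ‖G‖ ^ 2 ≤ ((m : ℝ) * (2 * L)) ^ 2 := by nlinarith
      have h2 : ((m : ℝ)⁻¹ * η (t + 1)) ^ 2 * ‖G‖ ^ 2
          ≤ ((m : ℝ)⁻¹ * η (t + 1)) ^ 2 * ((m : ℝ) * (2 * L)) ^ 2 := by
        nlinarith [sq_nonneg ((m : ℝ)⁻¹ * η (t + 1))]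
      have h3 : ((m : ℝ)⁻¹ * η (t + 1)) ^ 2 * ((m : ℝ) * (2 * L)) ^ 2
          = 4 * L ^ 2 * (η (t + 1)) ^ 2 * ((m : ℝ)⁻¹ * (m : ℝ)) ^ 2 := by ring
      rw [h3, inv_mul_cancel₀ hm0, one_pow, mul_one] at h2
      exact h2
    rw [hsq, hccval]
    nlinarith [tm1, tm2, tm3, tm4]
  -- apply the recursion lemma
  have hann : ∀ t, 0 ≤ a t := fun t => norm_nonneg _
  have ha0 : a 0 = 0 := by
    have hD0 : Db 0 = 0 := by
      simp only [hDbdef]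
      rw [Finset.sum_congr rfl fun i _ => hΔ0 i]
      simp
    simp [hadef, hD0]
  have hccnn : ∀ t, 0 ≤ cc t := by
    intro t
    have h1 : 0 ≤ ∑ s ∈ Finset.Icc 1 (t - 1), η s * lam ^ (t - 1 - s) :=
      Finset.sum_nonneg fun s _ => mul_nonneg (hη s) (pow_nonneg hlam0 _)
    have h2 : 0 ≤ 4 * L ^ 2 * (η t) ^ 2 := by positivity
    have h3 : 0 ≤ 8 * L ^ 2 * η t := by
      have := hη t
      positivity
    simp only [hccdef]
    nlinarith
  have hhhnn : ∀ t, 0 ≤ hh t := by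
    intro t
    have hχnn : 0 ≤ χ t := by
      simp only [hχdef]
      split <;> norm_num
    have h1 : 0 ≤ (4 * L / m) * η t := by
      have := hη t
      have h4 : 0 ≤ 4 * L / (m : ℝ) := by positivity
      positivity
    exact mul_nonneg h1 hχnn
  have hfinal := aux_sqrt_rec a cc hh hann hccnn hhhnn ha0 harec T
  -- identify the sums
  set A : ℝ := ∑ t ∈ Finset.Icc 1 T, (η t) ^ 2 with hAdef
  set B : ℝ := ∑ t ∈ Finset.Icc 1 T,
      η t * ∑ q ∈ Finset.Icc 1 (t - 1), η q * lam ^ (t - q - 1) with hBdef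
  have hAnn : 0 ≤ A := Finset.sum_nonneg fun t _ => sq_nonneg _
  have hBnn : 0 ≤ B := Finset.sum_nonneg fun t _ => mul_nonneg (hη t)
    (Finset.sum_nonneg fun q _ => mul_nonneg (hη q) (pow_nonneg hlam0 _))
  have hsum_cc : ∑ t ∈ Finset.Icc 1 T, cc t = 4 * L ^ 2 * A + 8 * L ^ 2 * B := by
    rw [hAdef, hBdef, Finset.mul_sum, Finset.mul_sum, ← Finset.sum_add_distrib]
    refine Finset.sum_congr rfl fun t _ => ?_
    have he : ∀ q ∈ Finset.Icc 1 (t - 1), η q * lam ^ (t - 1 - q) = η q * lam ^ (t - q - 1) :=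
      fun q hq => by rw [Nat.sub_right_comm]
    simp only [hccdef]
    rw [Finset.sum_congr rfl he]
    ring
  have hsqrt : Real.sqrt (∑ t ∈ Finset.Icc 1 T, cc t)
      ≤ 2 * L * Real.sqrt A + 4 * L * Real.sqrt B := by
    have h2 : 4 * L ^ 2 * A + 8 * L ^ 2 * B
        ≤ (2 * L * Real.sqrt A + 4 * L * Real.sqrt B) ^ 2 := by
      nlinarith [Real.sq_sqrt hAnn, Real.sq_sqrt hBnn, Real.sqrt_nonneg A,
        Real.sqrt_nonneg B, hL.le, mul_nonneg (Real.sqrt_nonneg A) (Real.sqrt_nonneg B)]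
    calc Real.sqrt (∑ t ∈ Finset.Icc 1 T, cc t)
        ≤ Real.sqrt ((2 * L * Real.sqrt A + 4 * L * Real.sqrt B) ^ 2) := by
          apply Real.sqrt_le_sqrt
          rw [hsum_cc]
          exact h2
      _ = 2 * L * Real.sqrt A + 4 * L * Real.sqrt B := by
          apply Real.sqrt_sq
          have := Real.sqrt_nonneg A
          have := Real.sqrt_nonneg B
          positivity
  have hsum_hh : ∑ t ∈ Finset.Icc 1 T, hh t
      = (4 * L / m) * ∑ t ∈ Finset.Icc 1 T, η t * (if j t r = k then (1:ℝ) else 0) := by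
    rw [Finset.mul_sum]
    refine Finset.sum_congr rfl fun t _ => ?_
    simp only [hhhdef, hχdef]
    ring
  have hLHS : ((m : ℝ)⁻¹ • ∑ i, wS T i) - ((m : ℝ)⁻¹ • ∑ i, w' T i) = Db T := by
    simp only [hDbdef, hΔdef]
    rw [Finset.sum_sub_distrib, smul_sub]
  rw [hLHS]
  have : ‖Db T‖ = a T := by simp [hadef]
  rw [this]
  calc a T ≤ Real.sqrt (∑ t ∈ Finset.Icc 1 T, cc t) + ∑ t ∈ Finset.Icc 1 T, hh t := hfinal
    _ ≤ 2 * L * Real.sqrt A + 4 * L * Real.sqrt B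
        + (4 * L / m) * ∑ t ∈ Finset.Icc 1 T, η t * (if j t r = k then (1:ℝ) else 0) := by
        rw [hsum_hh]
        exact add_le_add hsqrt le_rfl


set_option maxHeartbeats 800000 in
theorem stmt_6 (d m n : ℕ) (hd : 1 ≤ d) (hm : 1 ≤ m) (hn : 1 ≤ n)
    {Z : Type*} (f : EuclideanSpace ℝ (Fin d) → Z → ℝ)
    (L : ℝ) (hL : 0 < L)
    (hconv : ∀ z : Z, ConvexOn ℝ Set.univ (fun w => f w z))
    (hdiff : ∀ z : Z, Differentiable ℝ (fun w => f w z))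
    (hgrad : ∀ (z : Z) (w : EuclideanSpace ℝ (Fin d)),
      ‖gradient (fun w' => f w' z) w‖ ≤ L)
    (P : Fin m → Fin m → ℝ)
    (hPsymm : ∀ i l, P i l = P l i)
    (hPnonneg : ∀ i l, 0 ≤ P i l)
    (hProw : ∀ i, ∑ l, P i l = 1)
    (lam : ℝ) (hlam0 : 0 ≤ lam) (hlam1 : lam < 1)
    (hcons : ∀ x : Fin m → EuclideanSpace ℝ (Fin d), ∑ i, x i = 0 →
      ∑ i, ‖∑ l, P i l • x l‖ ^ 2 ≤ lam ^ 2 * ∑ i, ‖x i‖ ^ 2)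
    (S S' : Fin m → Fin n → Z) (j : ℕ → Fin m → Fin n)
    (η : ℕ → ℝ) (hη : ∀ t, 0 ≤ η t)
    (w0 : EuclideanSpace ℝ (Fin d))
    (wS : ℕ → Fin m → EuclideanSpace ℝ (Fin d))
    (hwS0 : ∀ i, wS 0 i = w0)
    (hwSrec : ∀ t i, wS (t + 1) i =
      (∑ l, P i l • wS t l) -
        η (t + 1) • gradient (fun w => f w (S i (j (t + 1) i))) (wS t i))
    (wSrk : Fin m → Fin n → ℕ → Fin m → EuclideanSpace ℝ (Fin d))
    (hwSrk0 : ∀ r k i, wSrk r k 0 i = w0)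
    (hwSrkrec : ∀ r k t i, wSrk r k (t + 1) i =
      (∑ l, P i l • wSrk r k t l) -
        η (t + 1) • gradient
          (fun w => f w (if i = r ∧ j (t + 1) i = k then S' r k
            else S i (j (t + 1) i))) (wSrk r k t i))
    (T : ℕ) (hT : 1 ≤ T) :
    (1 / ((m : ℝ) * n)) * ∑ r : Fin m, ∑ k : Fin n,
        ‖((m : ℝ)⁻¹ • ∑ i, wS T i) - ((m : ℝ)⁻¹ • ∑ i, wSrk r k T i)‖
      ≤ 2 * L * Real.sqrt (∑ t ∈ Finset.Icc 1 T, (η t) ^ 2)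
        + 4 * L * Real.sqrt (∑ t ∈ Finset.Icc 1 T,
            η t * ∑ q ∈ Finset.Icc 1 (t - 1), η q * lam ^ (t - q - 1))
        + (4 * L / ((m : ℝ) * n)) * ∑ t ∈ Finset.Icc 1 T, η t := by
  have hm0 : ((m : ℝ)) ≠ 0 := Nat.cast_ne_zero.2 (by omega)
  have hn0 : ((n : ℝ)) ≠ 0 := Nat.cast_ne_zero.2 (by omega)
  have hmn : (0:ℝ) < (m : ℝ) * n := by
    have h1 : (0:ℝ) < m := by exact_mod_cast Nat.pos_of_ne_zero (by omega)
    have h2 : (0:ℝ) < n := by exact_mod_cast Nat.pos_of_ne_zero (by omega)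
    positivity
  set K : ℝ := 2 * L * Real.sqrt (∑ t ∈ Finset.Icc 1 T, (η t) ^ 2)
      + 4 * L * Real.sqrt (∑ t ∈ Finset.Icc 1 T,
          η t * ∑ q ∈ Finset.Icc 1 (t - 1), η q * lam ^ (t - q - 1)) with hKdef
  have hpair : ∀ (r : Fin m) (k : Fin n),
      ‖((m : ℝ)⁻¹ • ∑ i, wS T i) - ((m : ℝ)⁻¹ • ∑ i, wSrk r k T i)‖
        ≤ K + (4 * L / m) * ∑ t ∈ Finset.Icc 1 T,
            η t * (if j t r = k then (1:ℝ) else 0) := by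
    intro r k
    have := aux_pair d m n hm f L hL hconv hdiff hgrad P hPsymm hProw lam hlam0 hcons
      S S' j η hη w0 wS hwS0 hwSrec r k (wSrk r k) (hwSrk0 r k) (hwSrkrec r k) T
    rw [hKdef]
    linarith
  have hk : ∀ r : Fin m, ∑ k : Fin n, ∑ t ∈ Finset.Icc 1 T,
      η t * (if j t r = k then (1:ℝ) else 0) = ∑ t ∈ Finset.Icc 1 T, η t := by
    intro r
    rw [Finset.sum_comm]
    refine Finset.sum_congr rfl fun t _ => ?_
    rw [← Finset.mul_sum]
    simp
  have hsum_eval : ∑ r : Fin m, ∑ k : Fin n, (K + (4 * L / m) * ∑ t ∈ Finset.Icc 1 T,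
      η t * (if j t r = k then (1:ℝ) else 0))
      = ((m : ℝ) * n) * K + 4 * L * ∑ t ∈ Finset.Icc 1 T, η t := by
    have hr : ∀ r : Fin m, ∑ k : Fin n, (K + (4 * L / m) * ∑ t ∈ Finset.Icc 1 T,
        η t * (if j t r = k then (1:ℝ) else 0))
        = (n : ℝ) * K + (4 * L / m) * ∑ t ∈ Finset.Icc 1 T, η t := by
      intro r
      rw [Finset.sum_add_distrib, Finset.sum_const, Finset.card_univ, Fintype.card_fin,
        nsmul_eq_mul, ← Finset.mul_sum, hk r]
    rw [Finset.sum_congr rfl fun r _ => hr r, Finset.sum_const, Finset.card_univ,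
      Fintype.card_fin, nsmul_eq_mul]
    field_simp
  have hmain : ∑ r : Fin m, ∑ k : Fin n,
      ‖((m : ℝ)⁻¹ • ∑ i, wS T i) - ((m : ℝ)⁻¹ • ∑ i, wSrk r k T i)‖
      ≤ ((m : ℝ) * n) * K + 4 * L * ∑ t ∈ Finset.Icc 1 T, η t := by
    rw [← hsum_eval]
    exact Finset.sum_le_sum fun r _ => Finset.sum_le_sum fun k _ => hpair r k
  calc (1 / ((m : ℝ) * n)) * ∑ r : Fin m, ∑ k : Fin n,
        ‖((m : ℝ)⁻¹ • ∑ i, wS T i) - ((m : ℝ)⁻¹ • ∑ i, wSrk r k T i)‖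
      ≤ (1 / ((m : ℝ) * n)) * (((m : ℝ) * n) * K + 4 * L * ∑ t ∈ Finset.Icc 1 T, η t) := by
        apply mul_le_mul_of_nonneg_left hmain
        positivity
    _ = K + (4 * L / ((m : ℝ) * n)) * ∑ t ∈ Finset.Icc 1 T, η t := by
        field_simp
    _ = _ := by rw [hKdef]
end
end

section
/- Assume for every z that f_z is convex, differentiable with ‖∇f_z w‖ ≤ L for all w (L > 0), and that ∇f_z is β-Lipschitz (β > 0); assume η t ≤ 2/β for all t ≥ 1 and that λ ∈ [0,1) is a consensus rate for P. Fix T ≥ 1 with Ση := ∑_{t=1}^{T} η t > 0 and define the weighted average output w̄avg_S = (Ση)⁻¹ • ∑_{t=1}^{T} η t • w̄_S t (and analogously for each neighboring dataset). Then (1/(m*n)) * ∑_{r : Fin m} ∑_{k : Fin n} ‖w̄avg_S - w̄avg_{S_{rk}}‖ ≤ (Ση)⁻¹ * ∑_{t=1}^{T} η t * (4*β*L * ∑_{s=1}^{t} η s * ∑_{q=1}^{s-1} η q * λ^(s-q-1) + (2*L/(m*n)) * ∑_{s=1}^{t} η s). -/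
set_option maxHeartbeats 1000000

open Finset InnerProductSpace

section Aux

variable {E : Type*} [NormedAddCommGroup E] [InnerProductSpace ℝ E] [CompleteSpace E]

private theorem line_hasDerivAt {f : E → ℝ} {g : E → E} (hg : ∀ w, HasGradientAt f (g w) w)
    (x v : E) (τ : ℝ) :
    HasDerivAt (fun σ : ℝ => f (x + σ • v)) (inner ℝ (g (x + τ • v)) v : ℝ) τ := by
  have h1 : HasDerivAt (fun σ : ℝ => x + σ • v) v τ := by
    simpa using ((hasDerivAt_id τ).smul_const v).const_add x
  have h2 := (hg (x + τ • v)).hasFDerivAt.comp_hasDerivAt τ h1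
  simp only [toDual_apply_apply] at h2
  exact h2

theorem aux_first_order_s12 {f : E → ℝ} {g : E → E} (hconv : ConvexOn ℝ Set.univ f)
    (hg : ∀ w, HasGradientAt f (g w) w) (x y : E) :
    f x + (inner ℝ (g x) (y - x) : ℝ) ≤ f y := by
  set v := y - x with hv
  have hgconv : ConvexOn ℝ Set.univ (fun τ : ℝ => f (x + τ • v)) := by
    have := hconv.comp_affineMap (AffineMap.lineMap x y)
    have he : (fun τ : ℝ => f (x + τ • v)) = f ∘ (AffineMap.lineMap x y) := by
      funext τ; simp [AffineMap.lineMap_apply, hv, add_comm]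
    rw [he]
    simpa using this
  have h0 := hgconv.le_slope_of_hasDerivWithinAt_Ioi (Set.mem_univ 0) (Set.mem_univ 1)
    one_pos ((line_hasDerivAt hg x v 0).hasDerivWithinAt)
  rw [slope_def_field] at h0
  simp only [zero_smul, add_zero, one_smul] at h0
  have hxy : x + v = y := by simp [hv]
  rw [hxy] at h0
  have : (inner ℝ (g x) v : ℝ) ≤ f y - f x := by
    have := h0
    field_simp at this
    linarith
  linarith

theorem aux_descent {f : E → ℝ} {g : E → E} {β : ℝ} (hβ : 0 ≤ β)
    (hg : ∀ w, HasGradientAt f (g w) w)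
    (hlip : ∀ w w', ‖g w - g w'‖ ≤ β * ‖w - w'‖) (x y : E) :
    f y ≤ f x + (inner ℝ (g x) (y - x) : ℝ) + β / 2 * ‖y - x‖ ^ 2 := by
  set v := y - x with hv
  set h : ℝ → ℝ := fun τ => f (x + τ • v) - τ * (inner ℝ (g x) v : ℝ) - β / 2 * τ ^ 2 * ‖v‖ ^ 2
    with hh
  have hd : ∀ τ : ℝ, HasDerivAt h
      ((inner ℝ (g (x + τ • v)) v : ℝ) - (inner ℝ (g x) v : ℝ) - β * τ * ‖v‖ ^ 2) τ := by
    intro τ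
    have h1 := line_hasDerivAt hg x v τ
    have h2 : HasDerivAt (fun τ : ℝ => τ * (inner ℝ (g x) v : ℝ)) (inner ℝ (g x) v : ℝ) τ := by
      simpa using (hasDerivAt_id τ).mul_const (inner ℝ (g x) v : ℝ)
    have h3 : HasDerivAt (fun τ : ℝ => β / 2 * τ ^ 2 * ‖v‖ ^ 2) (β * τ * ‖v‖ ^ 2) τ := by
      have := ((hasDerivAt_pow 2 τ).const_mul (β / 2)).mul_const (‖v‖ ^ 2)
      refine this.congr_deriv ?_
      ring
    exact (h1.sub h2).sub h3
  have hanti : AntitoneOn h (Set.Icc 0 1) := by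
    apply antitoneOn_of_deriv_nonpos (convex_Icc 0 1)
    · exact fun τ _ => ((hd τ).differentiableAt).continuousAt.continuousWithinAt
    · intro τ _
      exact ((hd τ).differentiableAt).differentiableWithinAt
    · intro τ hτ
      rw [interior_Icc] at hτ
      rw [(hd τ).deriv]
      have hb : (inner ℝ (g (x + τ • v)) v : ℝ) - (inner ℝ (g x) v : ℝ)
          = (inner ℝ (g (x + τ • v) - g x) v : ℝ) := by rw [inner_sub_left]
      have hcs : (inner ℝ (g (x + τ • v) - g x) v : ℝ) ≤ ‖g (x + τ • v) - g x‖ * ‖v‖ :=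
        real_inner_le_norm _ _
      have hl : ‖g (x + τ • v) - g x‖ ≤ β * (τ * ‖v‖) := by
        have := hlip (x + τ • v) x
        simpa [norm_smul, abs_of_pos hτ.1] using this
      nlinarith [norm_nonneg v, hτ.1.le, mul_le_mul_of_nonneg_right hl (norm_nonneg v)]
  have h10 : h 1 ≤ h 0 := hanti (Set.mem_Icc.2 ⟨le_refl 0, zero_le_one⟩)
    (Set.mem_Icc.2 ⟨zero_le_one, le_refl 1⟩) zero_le_one
  have hx0 : x + (0 : ℝ) • v = x := by simp
  have hx1 : x + (1 : ℝ) • v = y := by simp [hv]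
  simp only [hh, hx0, hx1] at h10
  norm_num at h10
  linarith

theorem aux_coco {f : E → ℝ} {g : E → E} {β : ℝ} (hβ : 0 < β)
    (hconv : ConvexOn ℝ Set.univ f)
    (hg : ∀ w, HasGradientAt f (g w) w)
    (hlip : ∀ w w', ‖g w - g w'‖ ≤ β * ‖w - w'‖) (x y : E) :
    ‖g x - g y‖ ^ 2 ≤ β * (inner ℝ (g x - g y) (x - y) : ℝ) := by
  have one : ∀ a b : E, 1 / (2 * β) * ‖g b - g a‖ ^ 2
      ≤ (f b - (inner ℝ (g a) b : ℝ)) - (f a - (inner ℝ (g a) a : ℝ)) := by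
    intro a b
    set φ : E → ℝ := fun w => f w - (inner ℝ (g a) w : ℝ) with hφ
    set gφ : E → E := fun w => g w - g a with hgφ
    have hgφat : ∀ w, HasGradientAt φ (gφ w) w := by
      intro w
      have h1 : HasFDerivAt f (toDual ℝ E (g w)) w := (hg w).hasFDerivAt
      have h2 : HasFDerivAt (fun u : E => (inner ℝ (g a) u : ℝ)) (toDual ℝ E (g a)) w := by
        have := (toDual ℝ E (g a)).hasFDerivAt (x := w)
        rw [show (fun u : E => (inner ℝ (g a) u : ℝ)) = ⇑(toDual ℝ E (g a)) from
          funext fun u => toDual_apply_apply.symm]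
        exact this
      have := h1.sub h2
      rw [← map_sub] at this
      exact hasGradientAt_iff_hasFDerivAt.2 this
    have hφlip : ∀ w w', ‖gφ w - gφ w'‖ ≤ β * ‖w - w'‖ := by
      intro w w'; simpa [hgφ, sub_sub_sub_cancel_right] using hlip w w'
    -- φ is minimized at a
    have hmin : ∀ w, φ a ≤ φ w := by
      intro w
      have := aux_first_order_s12 hconv hg a w
      rw [inner_sub_right] at this
      simp only [hφ]
      linarith
    -- descent step from b
    have hdes := aux_descent hβ.le hgφat hφlip b (b - β⁻¹ • gφ b)
    have he1 : b - β⁻¹ • gφ b - b = -(β⁻¹ • gφ b) := by abel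
    rw [he1] at hdes
    have he2 : (inner ℝ (gφ b) (-(β⁻¹ • gφ b)) : ℝ) = -(β⁻¹ * ‖gφ b‖ ^ 2) := by
      rw [inner_neg_right, real_inner_smul_right, real_inner_self_eq_norm_sq]
    have he3 : ‖-(β⁻¹ • gφ b)‖ ^ 2 = β⁻¹ ^ 2 * ‖gφ b‖ ^ 2 := by
      rw [norm_neg, norm_smul]
      rw [Real.norm_eq_abs, abs_of_pos (inv_pos.2 hβ)]
      ring
    rw [he2, he3] at hdes
    have hmin' := hmin (b - β⁻¹ • gφ b)
    have key : φ a + 1 / (2 * β) * ‖gφ b‖ ^ 2 ≤ φ b := by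
      have hβ' : β ≠ 0 := hβ.ne'
      have : β / 2 * (β⁻¹ ^ 2 * ‖gφ b‖ ^ 2) = 1 / (2 * β) * ‖gφ b‖ ^ 2 := by
        field_simp
      have h2b : β⁻¹ * ‖gφ b‖ ^ 2 = 2 * (1 / (2 * β) * ‖gφ b‖ ^ 2) := by
        field_simp
      linarith [hdes, hmin', this]
    have : φ b - φ a = (f b - (inner ℝ (g a) b : ℝ)) - (f a - (inner ℝ (g a) a : ℝ)) := by
      simp [hφ]
    rw [hgφ] at key
    simp only [hφ] at key
    linarith
  have h1 := one x y
  have h2 := one y x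
  have hn : ‖g x - g y‖ = ‖g y - g x‖ := norm_sub_rev _ _
  have hip : (inner ℝ (g x - g y) (x - y) : ℝ)
      = (inner ℝ (g x) x : ℝ) - (inner ℝ (g x) y : ℝ) - (inner ℝ (g y) x : ℝ)
        + (inner ℝ (g y) y : ℝ) := by
    rw [inner_sub_left, inner_sub_right, inner_sub_right]; ring
  have hβ' : 0 < 1 / (2 * β) := by positivity
  have hsum : 2 * (1 / (2 * β)) * ‖g x - g y‖ ^ 2
      ≤ (inner ℝ (g x - g y) (x - y) : ℝ) := by
    rw [hip]
    calc 2 * (1 / (2 * β)) * ‖g x - g y‖ ^ 2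
        = 1 / (2 * β) * ‖g y - g x‖ ^ 2 + 1 / (2 * β) * ‖g x - g y‖ ^ 2 := by
          rw [← hn]; ring
      _ ≤ _ := by linarith
  have : 1 / β * ‖g x - g y‖ ^ 2 ≤ (inner ℝ (g x - g y) (x - y) : ℝ) := by
    have : 2 * (1 / (2 * β)) = 1 / β := by field_simp
    linarith [hsum, this ▸ hsum]
  calc ‖g x - g y‖ ^ 2 = β * (1 / β * ‖g x - g y‖ ^ 2) := by field_simp
    _ ≤ β * (inner ℝ (g x - g y) (x - y) : ℝ) := by
        exact mul_le_mul_of_nonneg_left this hβ.le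

theorem aux_nonexp {m : ℕ} (hm : 0 < m) {β η : ℝ} (hβ : 0 < β) (hη0 : 0 ≤ η)
    (hη2 : η ≤ 2 / β) (g : Fin m → E → E)
    (hcoco : ∀ i (x y : E), ‖g i x - g i y‖ ^ 2 ≤ β * (inner ℝ (g i x - g i y) (x - y) : ℝ))
    (x y : E) :
    ‖(x - η • ((m : ℝ)⁻¹ • ∑ i, g i x)) - (y - η • ((m : ℝ)⁻¹ • ∑ i, g i y))‖ ≤ ‖x - y‖ := by
  have hmR : (0 : ℝ) < (m : ℝ) := by exact_mod_cast hm
  set D : E := (m : ℝ)⁻¹ • ∑ i, (g i x - g i y) with hD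
  have hrw : (x - η • ((m : ℝ)⁻¹ • ∑ i, g i x)) - (y - η • ((m : ℝ)⁻¹ • ∑ i, g i y))
      = (x - y) - η • D := by
    rw [hD, Finset.sum_sub_distrib, smul_sub, smul_sub]
    abel
  set K : ℝ := (m : ℝ)⁻¹ * ∑ i, ‖g i x - g i y‖ ^ 2 with hK
  have hK0 : 0 ≤ K := by
    apply mul_nonneg (by positivity)
    exact Finset.sum_nonneg fun i _ => sq_nonneg _
  have h1 : ‖D‖ ^ 2 ≤ K := by
    have hn : ‖D‖ ≤ (m : ℝ)⁻¹ * ∑ i, ‖g i x - g i y‖ := by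
      rw [hD, norm_smul]
      simp only [norm_inv, Real.norm_natCast]
      exact mul_le_mul_of_nonneg_left (norm_sum_le _ _) (by positivity)
    have hcs : (∑ i : Fin m, ‖g i x - g i y‖) ^ 2 ≤ (m : ℝ) * ∑ i, ‖g i x - g i y‖ ^ 2 := by
      have := Finset.sum_mul_sq_le_sq_mul_sq Finset.univ (fun _ : Fin m => (1 : ℝ))
        (fun i => ‖g i x - g i y‖)
      simpa [Finset.card_univ, mul_comm] using this
    have h2 : ‖D‖ ^ 2 ≤ ((m : ℝ)⁻¹ * ∑ i, ‖g i x - g i y‖) ^ 2 := by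
      apply pow_le_pow_left₀ (norm_nonneg _) hn
    calc ‖D‖ ^ 2 ≤ ((m : ℝ)⁻¹ * ∑ i, ‖g i x - g i y‖) ^ 2 := h2
      _ = (m : ℝ)⁻¹ ^ 2 * (∑ i, ‖g i x - g i y‖) ^ 2 := by ring
      _ ≤ (m : ℝ)⁻¹ ^ 2 * ((m : ℝ) * ∑ i, ‖g i x - g i y‖ ^ 2) := by
          exact mul_le_mul_of_nonneg_left hcs (by positivity)
      _ = K := by rw [hK]; field_simp
  have h2 : β⁻¹ * K ≤ (inner ℝ D (x - y) : ℝ) := by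
    rw [hD, real_inner_smul_left, sum_inner]
    have : ∀ i : Fin m, i ∈ Finset.univ → β⁻¹ * ‖g i x - g i y‖ ^ 2
        ≤ (inner ℝ (g i x - g i y) (x - y) : ℝ) := by
      intro i _
      have := hcoco i x y
      rw [inv_mul_le_iff₀ hβ]
      linarith [this]
    calc β⁻¹ * K = (m : ℝ)⁻¹ * ∑ i, β⁻¹ * ‖g i x - g i y‖ ^ 2 := by
          rw [hK]
          simp only [Finset.mul_sum]
          exact Finset.sum_congr rfl fun (i : Fin m) _ => by ring
      _ ≤ (m : ℝ)⁻¹ * ∑ i, (inner ℝ (g i x - g i y) (x - y) : ℝ) := by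
          exact mul_le_mul_of_nonneg_left (Finset.sum_le_sum this) (by positivity)
  have hsq : ‖(x - y) - η • D‖ ^ 2 ≤ ‖x - y‖ ^ 2 := by
    rw [norm_sub_sq_real]
    have e1 : (inner ℝ (x - y) (η • D) : ℝ) = η * (inner ℝ D (x - y) : ℝ) := by
      rw [real_inner_smul_right, real_inner_comm]
    have e2 : ‖η • D‖ ^ 2 = η ^ 2 * ‖D‖ ^ 2 := by
      rw [norm_smul, Real.norm_eq_abs, abs_of_nonneg hη0]; ring
    rw [e1, e2]
    have hη2' : η * β ≤ 2 := by
      rw [← le_div_iff₀ hβ] at *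
      exact hη2
    have s1 : η ^ 2 * ‖D‖ ^ 2 ≤ η ^ 2 * K := mul_le_mul_of_nonneg_left h1 (sq_nonneg η)
    have hq : η ^ 2 * K ≤ 2 * η * (β⁻¹ * K) := by
      have ha : η ^ 2 * β ≤ 2 * η := by nlinarith [hη2', hη0]
      have hb := mul_le_mul_of_nonneg_right ha (mul_nonneg (inv_nonneg.2 hβ.le) hK0)
      calc η ^ 2 * K = η ^ 2 * β * (β⁻¹ * K) := by
            field_simp
        _ ≤ 2 * η * (β⁻¹ * K) := hb
    have s3 : 2 * η * (β⁻¹ * K) ≤ 2 * η * (inner ℝ D (x - y) : ℝ) :=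
      mul_le_mul_of_nonneg_left h2 (by positivity)
    linarith [s1, hq, s3]
  rw [hrw]
  have := Real.sqrt_le_sqrt hsq
  rwa [Real.sqrt_sq (norm_nonneg _), Real.sqrt_sq (norm_nonneg _)] at this

private theorem l2tri {m : ℕ} (a b : Fin m → E) :
    Real.sqrt (∑ i, ‖a i + b i‖ ^ 2)
      ≤ Real.sqrt (∑ i, ‖a i‖ ^ 2) + Real.sqrt (∑ i, ‖b i‖ ^ 2) := by
  let a' : PiLp 2 (fun _ : Fin m => E) := WithLp.toLp 2 a
  let b' : PiLp 2 (fun _ : Fin m => E) := WithLp.toLp 2 b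
  have h := norm_add_le a' b'
  rw [PiLp.norm_eq_of_L2, PiLp.norm_eq_of_L2, PiLp.norm_eq_of_L2] at h
  simpa [a', b'] using h

theorem aux_consensus {m : ℕ} (hm : 0 < m) (P : Fin m → Fin m → ℝ)
    (hProw : ∀ i, ∑ l, P i l = 1) (hPcol : ∀ l, ∑ i, P i l = 1)
    (lam L : ℝ) (hlam0 : 0 ≤ lam) (hL : 0 ≤ L)
    (hcons : ∀ x : Fin m → E, ∑ i, x i = 0 →
      ∑ i, ‖∑ l, P i l • x l‖ ^ 2 ≤ lam ^ 2 * ∑ i, ‖x i‖ ^ 2)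
    (η : ℕ → ℝ) (hη : ∀ t, 0 ≤ η t)
    (v G : ℕ → Fin m → E)
    (hv0 : ∀ i i', v 0 i = v 0 i')
    (hrec : ∀ t i, v (t + 1) i = (∑ l, P i l • v t l) - η (t + 1) • G (t + 1) i)
    (hG : ∀ t i, ‖G t i‖ ≤ L) (t : ℕ) :
    ∑ i, ‖v t i - (m : ℝ)⁻¹ • ∑ l, v t l‖
      ≤ (m : ℝ) * (2 * L * ∑ q ∈ Finset.Icc 1 t, η q * lam ^ (t - q)) := by
  have hmR : (0 : ℝ) < (m : ℝ) := by exact_mod_cast hm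
  set dev : ℕ → Fin m → E := fun t i => v t i - (m : ℝ)⁻¹ • ∑ l, v t l with hdev
  have hdev0 : ∀ t, ∑ i, dev t i = 0 := by
    intro t
    rw [hdev]
    simp only [Finset.sum_sub_distrib, Finset.sum_const, Finset.card_univ, Fintype.card_fin]
    rw [← Nat.cast_smul_eq_nsmul ℝ, smul_smul, mul_inv_cancel₀ hmR.ne', one_smul, sub_self]
  set X : ℕ → ℝ := fun t => Real.sqrt (∑ i, ‖dev t i‖ ^ 2) with hX
  set B : ℕ → ℝ := fun t => 2 * L * ∑ q ∈ Finset.Icc 1 t, η q * lam ^ (t - q) with hB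
  have hB0 : ∀ t, 0 ≤ B t := by
    intro t
    apply mul_nonneg (by positivity)
    exact Finset.sum_nonneg fun q _ => mul_nonneg (hη q) (pow_nonneg hlam0 _)
  have key : ∀ t, X t ≤ Real.sqrt m * B t := by
    intro t
    induction t with
    | zero =>
      have : ∀ i, dev 0 i = 0 := by
        intro i
        have hsum : ∑ l, v 0 l = (m : ℕ) • v 0 i := by
          calc ∑ l, v 0 l = ∑ _l : Fin m, v 0 i := Finset.sum_congr rfl fun l _ => hv0 l i
            _ = (m : ℕ) • v 0 i := by simp
        rw [hdev]
        simp only [hsum, ← Nat.cast_smul_eq_nsmul ℝ, smul_smul,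
          mul_inv_cancel₀ hmR.ne', inv_mul_cancel₀ hmR.ne', one_smul, sub_self]
      simp only [hX, hB, this, norm_zero]
      simp
    | succ t ih =>
      have hGbar : ‖(m : ℝ)⁻¹ • ∑ l, G (t + 1) l‖ ≤ L := by
        rw [norm_smul]
        simp only [norm_inv, Real.norm_natCast]
        calc (m : ℝ)⁻¹ * ‖∑ l, G (t + 1) l‖ ≤ (m : ℝ)⁻¹ * ((m : ℝ) * L) := by
              apply mul_le_mul_of_nonneg_left _ (by positivity)
              calc ‖∑ l, G (t + 1) l‖ ≤ ∑ l, ‖G (t + 1) l‖ := norm_sum_le _ _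
                _ ≤ ∑ _l : Fin m, L := Finset.sum_le_sum fun l _ => hG (t + 1) l
                _ = (m : ℝ) * L := by simp [mul_comm]
          _ = L := by field_simp
      have hid : ∀ i, dev (t + 1) i
          = (∑ l, P i l • dev t l)
            + -(η (t + 1) • (G (t + 1) i - (m : ℝ)⁻¹ • ∑ l, G (t + 1) l)) := by
        intro i
        have hsumv : ∑ l, v (t + 1) l
            = (∑ l, v t l) - η (t + 1) • ∑ l, G (t + 1) l := by
          simp only [hrec, Finset.sum_sub_distrib, ← Finset.smul_sum]
          congr 1
          rw [Finset.sum_comm]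
          exact Finset.sum_congr rfl fun p _ => by
            rw [← Finset.sum_smul, hPcol p, one_smul]
        have hu : ∑ l, P i l • dev t l
            = (∑ l, P i l • v t l) - (m : ℝ)⁻¹ • ∑ l, v t l := by
          simp only [hdev, smul_sub, Finset.sum_sub_distrib, ← Finset.sum_smul, hProw i,
            one_smul]
        have hdd : dev (t + 1) i = v (t + 1) i - (m : ℝ)⁻¹ • ∑ l, v (t + 1) l := rfl
        rw [hdd, hrec t i, hsumv, hu, smul_sub ((m : ℝ)⁻¹), smul_sub (η (t + 1)),
          smul_comm (η (t + 1)) ((m : ℝ)⁻¹)]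
        abel
      have htri : X (t + 1) ≤ lam * X t + η (t + 1) * (2 * L) * Real.sqrt m := by
        have h1 := l2tri (fun i => ∑ l, P i l • dev t l)
          (fun i => -(η (t + 1) • (G (t + 1) i - (m : ℝ)⁻¹ • ∑ l, G (t + 1) l)))
        have e0 : X (t + 1) = Real.sqrt (∑ i, ‖(∑ l, P i l • dev t l)
            + -(η (t + 1) • (G (t + 1) i - (m : ℝ)⁻¹ • ∑ l, G (t + 1) l))‖ ^ 2) := by
          show Real.sqrt (∑ i, ‖dev (t + 1) i‖ ^ 2) = _
          congr 1
          exact Finset.sum_congr rfl fun i _ => by rw [hid i]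
        have h2 : Real.sqrt (∑ i, ‖∑ l, P i l • dev t l‖ ^ 2) ≤ lam * X t := by
          have := hcons (dev t) (hdev0 t)
          have h3 := Real.sqrt_le_sqrt this
          rwa [Real.sqrt_mul (sq_nonneg lam), Real.sqrt_sq hlam0] at h3
        have h4 : Real.sqrt (∑ i, ‖-(η (t + 1) • (G (t + 1) i
            - (m : ℝ)⁻¹ • ∑ l, G (t + 1) l))‖ ^ 2) ≤ η (t + 1) * (2 * L) * Real.sqrt m := by
          have hterm : ∀ i : Fin m, ‖-(η (t + 1) • (G (t + 1) i
              - (m : ℝ)⁻¹ • ∑ l, G (t + 1) l))‖ ^ 2 ≤ (η (t + 1) * (2 * L)) ^ 2 := by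
            intro i
            apply pow_le_pow_left₀ (norm_nonneg _)
            rw [norm_neg, norm_smul, Real.norm_eq_abs, abs_of_nonneg (hη (t + 1))]
            apply mul_le_mul_of_nonneg_left _ (hη (t + 1))
            calc ‖G (t + 1) i - (m : ℝ)⁻¹ • ∑ l, G (t + 1) l‖
                ≤ ‖G (t + 1) i‖ + ‖(m : ℝ)⁻¹ • ∑ l, G (t + 1) l‖ := norm_sub_le _ _
              _ ≤ L + L := add_le_add (hG (t + 1) i) hGbar
              _ = 2 * L := by ring
          calc Real.sqrt (∑ i, ‖-(η (t + 1) • (G (t + 1) i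
              - (m : ℝ)⁻¹ • ∑ l, G (t + 1) l))‖ ^ 2)
              ≤ Real.sqrt (∑ _i : Fin m, (η (t + 1) * (2 * L)) ^ 2) :=
                Real.sqrt_le_sqrt (Finset.sum_le_sum fun i _ => hterm i)
            _ = η (t + 1) * (2 * L) * Real.sqrt m := by
                rw [Finset.sum_const, Finset.card_univ, Fintype.card_fin, nsmul_eq_mul]
                rw [mul_comm ((m : ℕ) : ℝ), Real.sqrt_mul (sq_nonneg _),
                  Real.sqrt_sq (mul_nonneg (hη (t + 1)) (by positivity))]
        calc X (t + 1) = _ := e0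
          _ ≤ _ := h1
          _ ≤ lam * X t + η (t + 1) * (2 * L) * Real.sqrt m := add_le_add h2 h4
      have hBrec : B (t + 1) = lam * B t + η (t + 1) * (2 * L) := by
        show 2 * L * ∑ q ∈ Finset.Icc 1 (t + 1), η q * lam ^ (t + 1 - q)
          = lam * (2 * L * ∑ q ∈ Finset.Icc 1 t, η q * lam ^ (t - q)) + η (t + 1) * (2 * L)
        have hsplit : ∑ q ∈ Finset.Icc 1 (t + 1), η q * lam ^ (t + 1 - q)
            = (∑ q ∈ Finset.Icc 1 t, η q * lam ^ (t + 1 - q)) + η (t + 1) * lam ^ 0 := by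
          have := Finset.sum_Icc_succ_top (a := 1) (b := t) (by omega)
            (fun q => η q * lam ^ (t + 1 - q))
          rw [this]
          norm_num
        have hpow : ∀ q ∈ Finset.Icc 1 t, η q * lam ^ (t + 1 - q)
            = lam * (η q * lam ^ (t - q)) := by
          intro q hq
          rw [Finset.mem_Icc] at hq
          have : t + 1 - q = (t - q) + 1 := by omega
          rw [this, pow_succ]
          ring
        rw [hsplit, Finset.sum_congr rfl hpow, ← Finset.mul_sum]
        simp only [pow_zero, mul_one]
        ring
      calc X (t + 1) ≤ lam * X t + η (t + 1) * (2 * L) * Real.sqrt m := htri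
        _ ≤ lam * (Real.sqrt m * B t) + η (t + 1) * (2 * L) * Real.sqrt m := by
            apply add_le_add_left
            exact mul_le_mul_of_nonneg_left ih hlam0
        _ = Real.sqrt m * (lam * B t + η (t + 1) * (2 * L)) := by ring
        _ = Real.sqrt m * B (t + 1) := by rw [hBrec]
  -- from ℓ2 to ℓ1
  have hcs : (∑ i, ‖dev t i‖) ^ 2 ≤ (m : ℝ) * ∑ i, ‖dev t i‖ ^ 2 := by
    have := Finset.sum_mul_sq_le_sq_mul_sq Finset.univ (fun _ : Fin m => (1 : ℝ))
      (fun i => ‖dev t i‖)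
    simpa [Finset.card_univ, mul_comm] using this
  have h5 : ∑ i, ‖dev t i‖ ≤ Real.sqrt m * X t := by
    have h6 : ∑ i, ‖dev t i‖ = Real.sqrt ((∑ i, ‖dev t i‖) ^ 2) := by
      rw [Real.sqrt_sq (Finset.sum_nonneg fun i _ => norm_nonneg _)]
    rw [h6]
    calc Real.sqrt ((∑ i, ‖dev t i‖) ^ 2) ≤ Real.sqrt ((m : ℝ) * ∑ i, ‖dev t i‖ ^ 2) :=
        Real.sqrt_le_sqrt hcs
      _ = Real.sqrt m * X t := by rw [Real.sqrt_mul (by positivity)]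
  calc ∑ i, ‖dev t i‖ ≤ Real.sqrt m * X t := h5
    _ ≤ Real.sqrt m * (Real.sqrt m * B t) :=
        mul_le_mul_of_nonneg_left (key t) (Real.sqrt_nonneg _)
    _ = (Real.sqrt m * Real.sqrt m) * B t := by ring
    _ = (m : ℝ) * B t := by rw [Real.mul_self_sqrt (by positivity)]

end Aux

section Main

open Finset

theorem stmt_12 (d m n : ℕ) (hd : 1 ≤ d) (hm : 1 ≤ m) (hn : 1 ≤ n)
    {Z : Type*} (f : EuclideanSpace ℝ (Fin d) → Z → ℝ)
    (L : ℝ) (hL : 0 < L)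
    (hconv : ∀ z : Z, ConvexOn ℝ Set.univ (fun w => f w z))
    (hdiff : ∀ z : Z, Differentiable ℝ (fun w => f w z))
    (hgrad : ∀ (z : Z) (w : EuclideanSpace ℝ (Fin d)),
      ‖gradient (fun w' => f w' z) w‖ ≤ L)
    (β : ℝ) (hβ : 0 < β)
    (hsmooth : ∀ (z : Z) (w w' : EuclideanSpace ℝ (Fin d)),
      ‖gradient (fun u => f u z) w - gradient (fun u => f u z) w'‖ ≤ β * ‖w - w'‖)
    (P : Fin m → Fin m → ℝ)
    (hPsymm : ∀ i l, P i l = P l i)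
    (hPnonneg : ∀ i l, 0 ≤ P i l)
    (hProw : ∀ i, ∑ l, P i l = 1)
    (lam : ℝ) (hlam0 : 0 ≤ lam) (hlam1 : lam < 1)
    (hcons : ∀ x : Fin m → EuclideanSpace ℝ (Fin d), ∑ i, x i = 0 →
      ∑ i, ‖∑ l, P i l • x l‖ ^ 2 ≤ lam ^ 2 * ∑ i, ‖x i‖ ^ 2)
    (S S' : Fin m → Fin n → Z) (j : ℕ → Fin m → Fin n)
    (η : ℕ → ℝ) (hη : ∀ t, 0 ≤ η t)
    (hηβ : ∀ t, 1 ≤ t → η t ≤ 2 / β)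
    (w0 : EuclideanSpace ℝ (Fin d))
    (wS : ℕ → Fin m → EuclideanSpace ℝ (Fin d))
    (hwS0 : ∀ i, wS 0 i = w0)
    (hwSrec : ∀ t i, wS (t + 1) i =
      (∑ l, P i l • wS t l) -
        η (t + 1) • gradient (fun w => f w (S i (j (t + 1) i))) (wS t i))
    (wSrk : Fin m → Fin n → ℕ → Fin m → EuclideanSpace ℝ (Fin d))
    (hwSrk0 : ∀ r k i, wSrk r k 0 i = w0)
    (hwSrkrec : ∀ r k t i, wSrk r k (t + 1) i =
      (∑ l, P i l • wSrk r k t l) -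
        η (t + 1) • gradient
          (fun w => f w (if i = r ∧ j (t + 1) i = k then S' r k
            else S i (j (t + 1) i))) (wSrk r k t i))
    (T : ℕ) (hT : 1 ≤ T)
    (hSsum : 0 < ∑ t ∈ Finset.Icc 1 T, η t) :
    (1 / ((m : ℝ) * n)) * ∑ r : Fin m, ∑ k : Fin n,
        ‖(∑ t ∈ Finset.Icc 1 T, η t)⁻¹ •
            (∑ t ∈ Finset.Icc 1 T, η t • ((m : ℝ)⁻¹ • ∑ i, wS t i)) -
          (∑ t ∈ Finset.Icc 1 T, η t)⁻¹ •
            (∑ t ∈ Finset.Icc 1 T, η t • ((m : ℝ)⁻¹ • ∑ i, wSrk r k t i))‖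
      ≤ (∑ t ∈ Finset.Icc 1 T, η t)⁻¹ * ∑ t ∈ Finset.Icc 1 T,
          η t * (4 * β * L * ∑ s ∈ Finset.Icc 1 t,
              η s * ∑ q ∈ Finset.Icc 1 (s - 1), η q * lam ^ (s - q - 1)
            + (2 * L / ((m : ℝ) * n)) * ∑ s ∈ Finset.Icc 1 t, η s) := by
  classical
  have hm' : 0 < m := hm
  have hmR : (0 : ℝ) < (m : ℝ) := by exact_mod_cast hm'
  have hnR : (0 : ℝ) < (n : ℝ) := by exact_mod_cast hn
  have hPcol : ∀ l, ∑ i, P i l = 1 := by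
    intro l
    calc ∑ i, P i l = ∑ i, P l i := Finset.sum_congr rfl fun i _ => hPsymm i l
      _ = 1 := hProw l
  set grad : Z → EuclideanSpace ℝ (Fin d) → EuclideanSpace ℝ (Fin d) := fun z w => gradient (fun u => f u z) w with hgraddef
  have hgradAt : ∀ (z : Z) (w : EuclideanSpace ℝ (Fin d)), HasGradientAt (fun u => f u z) (grad z w) w :=
    fun z w => (hdiff z w).hasGradientAt
  have hcoco : ∀ (z : Z) (x y : EuclideanSpace ℝ (Fin d)), ‖grad z x - grad z y‖ ^ 2
      ≤ β * (inner ℝ (grad z x - grad z y) (x - y) : ℝ) :=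
    fun z x y => aux_coco hβ (hconv z) (hgradAt z) (hsmooth z) x y
  -- consensus bound
  set Cb : ℕ → ℝ := fun t => 2 * L * ∑ q ∈ Finset.Icc 1 t, η q * lam ^ (t - q) with hCb
  have hCb0 : ∀ t, 0 ≤ Cb t := by
    intro t
    apply mul_nonneg (by positivity)
    exact Finset.sum_nonneg fun q _ => mul_nonneg (hη q) (pow_nonneg hlam0 _)
  have consS : ∀ t, ∑ i, ‖wS t i - (m : ℝ)⁻¹ • ∑ l, wS t l‖ ≤ (m : ℝ) * Cb t := by
    have := aux_consensus hm' P hProw hPcol lam L hlam0 hL.le hcons η hη wS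
      (fun t i => grad (S i (j t i)) (wS (t - 1) i))
      (fun i i' => by rw [hwS0 i, hwS0 i'])
      (fun t i => hwSrec t i)
      (fun t i => hgrad _ _)
    exact this
  have consS' : ∀ r k t, ∑ i, ‖wSrk r k t i - (m : ℝ)⁻¹ • ∑ l, wSrk r k t l‖
      ≤ (m : ℝ) * Cb t := by
    intro r k
    have := aux_consensus hm' P hProw hPcol lam L hlam0 hL.le hcons η hη (wSrk r k)
      (fun t i => grad (if i = r ∧ j t i = k then S' r k else S i (j t i))
        (wSrk r k (t - 1) i))
      (fun i i' => by rw [hwSrk0 r k i, hwSrk0 r k i'])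
      (fun t i => hwSrkrec r k t i)
      (fun t i => hgrad _ _)
    exact this
  -- average recursion
  have havg : ∀ (v : ℕ → Fin m → EuclideanSpace ℝ (Fin d)) (Gv : Fin m → EuclideanSpace ℝ (Fin d)) (t : ℕ) (c : ℝ),
      (∀ i, v (t + 1) i = (∑ l, P i l • v t l) - c • Gv i) →
      (m : ℝ)⁻¹ • ∑ i, v (t + 1) i
        = ((m : ℝ)⁻¹ • ∑ i, v t i) - c • ((m : ℝ)⁻¹ • ∑ i, Gv i) := by
    intro v Gv t c hv
    have hs : ∑ i, v (t + 1) i = (∑ i, v t i) - c • ∑ i, Gv i := by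
      simp only [hv, Finset.sum_sub_distrib, ← Finset.smul_sum]
      congr 1
      rw [Finset.sum_comm]
      exact Finset.sum_congr rfl fun p _ => by rw [← Finset.sum_smul, hPcol p, one_smul]
    rw [hs, smul_sub, smul_comm]
  -- single-trajectory averages equal w0 at time 0
  have havg0 : ∀ (v : ℕ → Fin m → EuclideanSpace ℝ (Fin d)), (∀ i, v 0 i = w0) →
      (m : ℝ)⁻¹ • ∑ i, v 0 i = w0 := by
    intro v hv
    have : ∑ i, v 0 i = (m : ℕ) • w0 := by
      calc ∑ i, v 0 i = ∑ _i : Fin m, w0 := Finset.sum_congr rfl fun i _ => hv i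
        _ = (m : ℕ) • w0 := by simp
    rw [this, ← Nat.cast_smul_eq_nsmul ℝ, smul_smul, inv_mul_cancel₀ hmR.ne', one_smul]
  set Abnd : ℕ → ℝ := fun t => 4 * β * L * ∑ s ∈ Finset.Icc 1 t,
    η s * ∑ q ∈ Finset.Icc 1 (s - 1), η q * lam ^ (s - q - 1) with hAbnd
  -- main per-(r,k) stability bound
  have key : ∀ (r : Fin m) (k : Fin n) (t : ℕ),
      ‖((m : ℝ)⁻¹ • ∑ i, wS t i) - ((m : ℝ)⁻¹ • ∑ i, wSrk r k t i)‖
        ≤ Abnd t + (2 * L / (m : ℝ)) * ∑ s ∈ Finset.Icc 1 t,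
            η s * (if j s r = k then (1 : ℝ) else 0) := by
    intro r k t
    induction t with
    | zero =>
      rw [havg0 wS hwS0, havg0 (wSrk r k) (hwSrk0 r k), sub_self, norm_zero]
      simp [hAbnd]
    | succ t ih =>
      have hη'0 : 0 ≤ η (t + 1) := hη (t + 1)
      have hη'2 : η (t + 1) ≤ 2 / β := hηβ (t + 1) (by omega)
      set zz : Fin m → Z := fun i => S i (j (t + 1) i) with hzz
      set zz' : Fin m → Z := fun i => if i = r ∧ j (t + 1) i = k then S' r k else zz i
        with hzz'
      set u : EuclideanSpace ℝ (Fin d) := (m : ℝ)⁻¹ • ∑ i, wS t i with hu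
      set u' : EuclideanSpace ℝ (Fin d) := (m : ℝ)⁻¹ • ∑ i, wSrk r k t i with hu'
      have h1 : (m : ℝ)⁻¹ • ∑ i, wS (t + 1) i
          = u - η (t + 1) • ((m : ℝ)⁻¹ • ∑ i, grad (zz i) (wS t i)) :=
        havg wS (fun i => grad (zz i) (wS t i)) t (η (t + 1)) (fun i => hwSrec t i)
      have h2 : (m : ℝ)⁻¹ • ∑ i, wSrk r k (t + 1) i
          = u' - η (t + 1) • ((m : ℝ)⁻¹ • ∑ i, grad (zz' i) (wSrk r k t i)) :=
        havg (wSrk r k) (fun i => grad (zz' i) (wSrk r k t i)) t (η (t + 1))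
          (fun i => hwSrkrec r k t i)
      have hiden : ((m : ℝ)⁻¹ • ∑ i, wS (t + 1) i) - ((m : ℝ)⁻¹ • ∑ i, wSrk r k (t + 1) i)
          = ((u - η (t + 1) • ((m : ℝ)⁻¹ • ∑ i, grad (zz i) u))
              - (u' - η (t + 1) • ((m : ℝ)⁻¹ • ∑ i, grad (zz i) u')))
            - η (t + 1) • ((m : ℝ)⁻¹ • ∑ i, (grad (zz i) (wS t i) - grad (zz i) u))
            + η (t + 1) • ((m : ℝ)⁻¹ • ∑ i, (grad (zz' i) (wSrk r k t i) - grad (zz i) u')) := by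
        rw [h1, h2, Finset.sum_sub_distrib, Finset.sum_sub_distrib,
          smul_sub ((m : ℝ)⁻¹), smul_sub ((m : ℝ)⁻¹),
          smul_sub (η (t + 1)), smul_sub (η (t + 1))]
        abel
      have hA : ‖(u - η (t + 1) • ((m : ℝ)⁻¹ • ∑ i, grad (zz i) u))
          - (u' - η (t + 1) • ((m : ℝ)⁻¹ • ∑ i, grad (zz i) u'))‖ ≤ ‖u - u'‖ :=
        aux_nonexp hm' hβ hη'0 hη'2 (fun i => grad (zz i))
          (fun i x y => hcoco (zz i) x y) u u'
      have hB : ‖η (t + 1) • ((m : ℝ)⁻¹ • ∑ i, (grad (zz i) (wS t i) - grad (zz i) u))‖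
          ≤ η (t + 1) * (β * Cb t) := by
        rw [norm_smul, norm_smul]
        simp only [Real.norm_eq_abs, abs_of_nonneg hη'0, abs_inv, Nat.abs_cast]
        apply mul_le_mul_of_nonneg_left _ hη'0
        calc (m : ℝ)⁻¹ * ‖∑ i, (grad (zz i) (wS t i) - grad (zz i) u)‖
            ≤ (m : ℝ)⁻¹ * ∑ i, ‖grad (zz i) (wS t i) - grad (zz i) u‖ :=
              mul_le_mul_of_nonneg_left (norm_sum_le _ _) (by positivity)
          _ ≤ (m : ℝ)⁻¹ * ∑ i, β * ‖wS t i - u‖ := by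
              apply mul_le_mul_of_nonneg_left _ (by positivity)
              exact Finset.sum_le_sum fun i _ => hsmooth (zz i) (wS t i) u
          _ = (m : ℝ)⁻¹ * (β * ∑ i, ‖wS t i - u‖) := by rw [← Finset.mul_sum]
          _ ≤ (m : ℝ)⁻¹ * (β * ((m : ℝ) * Cb t)) := by
              apply mul_le_mul_of_nonneg_left _ (by positivity)
              exact mul_le_mul_of_nonneg_left (consS t) hβ.le
          _ = β * Cb t := by field_simp
      have hCsum : ∑ i, ‖grad (zz' i) (wSrk r k t i) - grad (zz i) u'‖
          ≤ β * ((m : ℝ) * Cb t) + (if j (t + 1) r = k then 2 * L else 0) := by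
        have hterm : ∀ i : Fin m, ‖grad (zz' i) (wSrk r k t i) - grad (zz i) u'‖
            ≤ β * ‖wSrk r k t i - u'‖
              + (if i = r ∧ j (t + 1) i = k then (2 * L : ℝ) else 0) := by
          intro i
          by_cases hc : i = r ∧ j (t + 1) i = k
          · rw [if_pos hc]
            calc ‖grad (zz' i) (wSrk r k t i) - grad (zz i) u'‖
                ≤ ‖grad (zz' i) (wSrk r k t i) - grad (zz' i) u'‖
                  + ‖grad (zz' i) u' - grad (zz i) u'‖ := by
                  have := norm_sub_le_norm_sub_add_norm_sub
                    (grad (zz' i) (wSrk r k t i)) (grad (zz' i) u') (grad (zz i) u')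
                  exact this
              _ ≤ β * ‖wSrk r k t i - u'‖ + (‖grad (zz' i) u'‖ + ‖grad (zz i) u'‖) :=
                  add_le_add (hsmooth (zz' i) _ _) (norm_sub_le _ _)
              _ ≤ β * ‖wSrk r k t i - u'‖ + (L + L) := by
                  apply add_le_add_right
                  exact add_le_add (hgrad _ _) (hgrad _ _)
              _ = β * ‖wSrk r k t i - u'‖ + 2 * L := by ring
          · rw [if_neg hc]
            have hz' : zz' i = zz i := if_neg hc
            rw [hz', add_zero]
            exact hsmooth (zz i) _ _
        calc ∑ i, ‖grad (zz' i) (wSrk r k t i) - grad (zz i) u'‖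
            ≤ ∑ i, (β * ‖wSrk r k t i - u'‖
                + (if i = r ∧ j (t + 1) i = k then (2 * L : ℝ) else 0)) :=
              Finset.sum_le_sum fun i _ => hterm i
          _ = β * (∑ i, ‖wSrk r k t i - u'‖)
                + ∑ i, (if i = r ∧ j (t + 1) i = k then (2 * L : ℝ) else 0) := by
              rw [Finset.sum_add_distrib, ← Finset.mul_sum]
          _ ≤ β * ((m : ℝ) * Cb t) + (if j (t + 1) r = k then 2 * L else 0) := by
              apply add_le_add
              · exact mul_le_mul_of_nonneg_left (consS' r k t) hβ.le
              · have : ∑ i, (if i = r ∧ j (t + 1) i = k then (2 * L : ℝ) else 0)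
                    = if j (t + 1) r = k then 2 * L else 0 := by
                  rw [Finset.sum_eq_single r]
                  · by_cases hk : j (t + 1) r = k
                    · rw [if_pos ⟨rfl, hk⟩, if_pos hk]
                    · rw [if_neg (fun h => hk h.2), if_neg hk]
                  · intro i _ hi
                    rw [if_neg (fun h => hi h.1)]
                  · intro h
                    exact absurd (Finset.mem_univ r) h
                rw [this]
      have hC : ‖η (t + 1) • ((m : ℝ)⁻¹ • ∑ i, (grad (zz' i) (wSrk r k t i) - grad (zz i) u'))‖
          ≤ η (t + 1) * (β * Cb t
              + (m : ℝ)⁻¹ * (if j (t + 1) r = k then 2 * L else 0)) := by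
        rw [norm_smul, norm_smul]
        simp only [Real.norm_eq_abs, abs_of_nonneg hη'0, abs_inv, Nat.abs_cast]
        apply mul_le_mul_of_nonneg_left _ hη'0
        calc (m : ℝ)⁻¹ * ‖∑ i, (grad (zz' i) (wSrk r k t i) - grad (zz i) u')‖
            ≤ (m : ℝ)⁻¹ * ∑ i, ‖grad (zz' i) (wSrk r k t i) - grad (zz i) u'‖ :=
              mul_le_mul_of_nonneg_left (norm_sum_le _ _) (by positivity)
          _ ≤ (m : ℝ)⁻¹ * (β * ((m : ℝ) * Cb t) + (if j (t + 1) r = k then 2 * L else 0)) :=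
              mul_le_mul_of_nonneg_left hCsum (by positivity)
          _ = β * Cb t + (m : ℝ)⁻¹ * (if j (t + 1) r = k then 2 * L else 0) := by
              rw [mul_add]
              congr 1
              field_simp
      have hstep : ‖((m : ℝ)⁻¹ • ∑ i, wS (t + 1) i) - ((m : ℝ)⁻¹ • ∑ i, wSrk r k (t + 1) i)‖
          ≤ ‖u - u'‖ + η (t + 1) * (β * Cb t)
            + η (t + 1) * (β * Cb t + (m : ℝ)⁻¹ * (if j (t + 1) r = k then 2 * L else 0)) := by
        rw [hiden]
        calc ‖_ - _ + _‖ ≤ ‖_ - _‖ + ‖_‖ := norm_add_le _ _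
          _ ≤ ‖_‖ + ‖_‖ + ‖_‖ := by
              apply add_le_add_left (norm_sub_le _ _)
          _ ≤ _ := by
              apply add_le_add (add_le_add hA hB) hC
      -- now combine with ih
      have hsplit1 : Abnd (t + 1) = Abnd t + 4 * β * L * (η (t + 1)
          * ∑ q ∈ Finset.Icc 1 t, η q * lam ^ (t - q)) := by
        rw [hAbnd]
        have hs := Finset.sum_Icc_succ_top (a := 1) (b := t) (by omega)
          (fun s => η s * ∑ q ∈ Finset.Icc 1 (s - 1), η q * lam ^ (s - q - 1))
        show 4 * β * L * ∑ s ∈ Finset.Icc 1 (t + 1), η s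
            * ∑ q ∈ Finset.Icc 1 (s - 1), η q * lam ^ (s - q - 1) = _
        rw [hs]
        have he : ∑ q ∈ Finset.Icc 1 ((t + 1) - 1), η q * lam ^ ((t + 1) - q - 1)
            = ∑ q ∈ Finset.Icc 1 t, η q * lam ^ (t - q) := by
          apply Finset.sum_congr (by norm_num)
          intro q hq
          rw [Finset.mem_Icc] at hq
          congr 2
          omega
        rw [he]
        ring
      have hsplit2 : ∑ s ∈ Finset.Icc 1 (t + 1), η s * (if j s r = k then (1 : ℝ) else 0)
          = (∑ s ∈ Finset.Icc 1 t, η s * (if j s r = k then (1 : ℝ) else 0))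
            + η (t + 1) * (if j (t + 1) r = k then (1 : ℝ) else 0) :=
        Finset.sum_Icc_succ_top (by omega) _
      have h2b : 2 * η (t + 1) * (β * Cb t) = 4 * β * L * (η (t + 1)
          * ∑ q ∈ Finset.Icc 1 t, η q * lam ^ (t - q)) := by
        rw [hCb]
        ring
      have hind : (m : ℝ)⁻¹ * (if j (t + 1) r = k then 2 * L else 0)
          = (2 * L / (m : ℝ)) * (if j (t + 1) r = k then (1 : ℝ) else 0) := by
        by_cases hk : j (t + 1) r = k
        · rw [if_pos hk, if_pos hk]; field_simp
        · rw [if_neg hk, if_neg hk]; ring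
      calc ‖((m : ℝ)⁻¹ • ∑ i, wS (t + 1) i) - ((m : ℝ)⁻¹ • ∑ i, wSrk r k (t + 1) i)‖
          ≤ ‖u - u'‖ + η (t + 1) * (β * Cb t)
            + η (t + 1) * (β * Cb t + (m : ℝ)⁻¹ * (if j (t + 1) r = k then 2 * L else 0)) :=
            hstep
        _ ≤ (Abnd t + (2 * L / (m : ℝ)) * ∑ s ∈ Finset.Icc 1 t,
              η s * (if j s r = k then (1 : ℝ) else 0))
            + η (t + 1) * (β * Cb t)
            + η (t + 1) * (β * Cb t + (m : ℝ)⁻¹ * (if j (t + 1) r = k then 2 * L else 0)) := by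
            apply add_le_add_left (add_le_add_left ih _) _
        _ = Abnd (t + 1) + (2 * L / (m : ℝ)) * ∑ s ∈ Finset.Icc 1 (t + 1),
              η s * (if j s r = k then (1 : ℝ) else 0) := by
            rw [hsplit1, hsplit2, mul_add, mul_add]
            have : η (t + 1) * ((m : ℝ)⁻¹ * (if j (t + 1) r = k then 2 * L else 0))
                = 2 * L / (m : ℝ) * (η (t + 1) * (if j (t + 1) r = k then (1 : ℝ) else 0)) := by
              rw [hind]; ring
            linarith [h2b, this]
  -- final assembly
  have hSig0 : (0 : ℝ) ≤ (∑ t ∈ Finset.Icc 1 T, η t)⁻¹ := inv_nonneg.2 hSsum.le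
  have final1 : ∀ (r : Fin m) (k : Fin n),
      ‖(∑ t ∈ Finset.Icc 1 T, η t)⁻¹ •
          (∑ t ∈ Finset.Icc 1 T, η t • ((m : ℝ)⁻¹ • ∑ i, wS t i)) -
        (∑ t ∈ Finset.Icc 1 T, η t)⁻¹ •
          (∑ t ∈ Finset.Icc 1 T, η t • ((m : ℝ)⁻¹ • ∑ i, wSrk r k t i))‖
      ≤ (∑ t ∈ Finset.Icc 1 T, η t)⁻¹ * ∑ t ∈ Finset.Icc 1 T,
          η t * (Abnd t + (2 * L / (m : ℝ)) * ∑ s ∈ Finset.Icc 1 t,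
            η s * (if j s r = k then (1 : ℝ) else 0)) := by
    intro r k
    rw [← smul_sub, ← Finset.sum_sub_distrib]
    rw [norm_smul, Real.norm_eq_abs, abs_of_nonneg hSig0]
    apply mul_le_mul_of_nonneg_left _ hSig0
    calc ‖∑ t ∈ Finset.Icc 1 T, (η t • ((m : ℝ)⁻¹ • ∑ i, wS t i)
            - η t • ((m : ℝ)⁻¹ • ∑ i, wSrk r k t i))‖
        ≤ ∑ t ∈ Finset.Icc 1 T, ‖η t • ((m : ℝ)⁻¹ • ∑ i, wS t i)
            - η t • ((m : ℝ)⁻¹ • ∑ i, wSrk r k t i)‖ := norm_sum_le _ _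
      _ ≤ ∑ t ∈ Finset.Icc 1 T, η t * (Abnd t
            + (2 * L / (m : ℝ)) * ∑ s ∈ Finset.Icc 1 t,
              η s * (if j s r = k then (1 : ℝ) else 0)) := by
          apply Finset.sum_le_sum
          intro t _
          rw [← smul_sub, norm_smul, Real.norm_eq_abs, abs_of_nonneg (hη t)]
          exact mul_le_mul_of_nonneg_left (key r k t) (hη t)
  have hk1 : ∀ (r : Fin m) (s : ℕ), ∑ k : Fin n, (if j s r = k then (1 : ℝ) else 0) = 1 := by
    intro r s
    rw [Finset.sum_ite_eq]
    simp
  have hkkk : ∀ t, ∑ r : Fin m, ∑ k : Fin n, (Abnd t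
        + (2 * L / (m : ℝ)) * ∑ s ∈ Finset.Icc 1 t, η s * (if j s r = k then (1 : ℝ) else 0))
      = (m : ℝ) * n * (Abnd t + (2 * L / ((m : ℝ) * n)) * ∑ s ∈ Finset.Icc 1 t, η s) := by
    intro t
    have hinner : ∀ r : Fin m, ∑ k : Fin n, (Abnd t
          + (2 * L / (m : ℝ)) * ∑ s ∈ Finset.Icc 1 t, η s * (if j s r = k then (1 : ℝ) else 0))
        = (n : ℝ) * Abnd t + (2 * L / (m : ℝ)) * ∑ s ∈ Finset.Icc 1 t, η s := by
      intro r
      rw [Finset.sum_add_distrib, Finset.sum_const, Finset.card_univ, Fintype.card_fin,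
        nsmul_eq_mul, ← Finset.mul_sum]
      congr 1
      rw [Finset.sum_comm]
      congr 1
      exact Finset.sum_congr rfl fun s _ => by rw [← Finset.mul_sum, hk1 r s, mul_one]
    rw [Finset.sum_congr rfl fun r (_ : r ∈ Finset.univ) => hinner r, Finset.sum_const,
      Finset.card_univ, Fintype.card_fin, nsmul_eq_mul]
    field_simp
    try ring
  have hswap : ∑ r : Fin m, ∑ k : Fin n, ∑ t ∈ Finset.Icc 1 T, η t * (Abnd t
        + (2 * L / (m : ℝ)) * ∑ s ∈ Finset.Icc 1 t, η s * (if j s r = k then (1 : ℝ) else 0))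
      = ∑ t ∈ Finset.Icc 1 T, η t * ((m : ℝ) * n
          * (Abnd t + (2 * L / ((m : ℝ) * n)) * ∑ s ∈ Finset.Icc 1 t, η s)) := by
    rw [Finset.sum_congr rfl fun r (_ : r ∈ Finset.univ) => Finset.sum_comm, Finset.sum_comm]
    apply Finset.sum_congr rfl
    intro t _
    rw [Finset.sum_congr rfl fun r (_ : r ∈ Finset.univ) => (Finset.mul_sum _ _ _).symm,
      ← Finset.mul_sum, hkkk t]
  have hAbndeq : ∀ t, Abnd t = 4 * β * L * ∑ s ∈ Finset.Icc 1 t,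
      η s * ∑ q ∈ Finset.Icc 1 (s - 1), η q * lam ^ (s - q - 1) := fun t => rfl
  calc (1 / ((m : ℝ) * n)) * ∑ r : Fin m, ∑ k : Fin n,
        ‖(∑ t ∈ Finset.Icc 1 T, η t)⁻¹ •
            (∑ t ∈ Finset.Icc 1 T, η t • ((m : ℝ)⁻¹ • ∑ i, wS t i)) -
          (∑ t ∈ Finset.Icc 1 T, η t)⁻¹ •
            (∑ t ∈ Finset.Icc 1 T, η t • ((m : ℝ)⁻¹ • ∑ i, wSrk r k t i))‖
      ≤ (1 / ((m : ℝ) * n)) * ∑ r : Fin m, ∑ k : Fin n,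
          ((∑ t ∈ Finset.Icc 1 T, η t)⁻¹ * ∑ t ∈ Finset.Icc 1 T,
            η t * (Abnd t + (2 * L / (m : ℝ)) * ∑ s ∈ Finset.Icc 1 t,
              η s * (if j s r = k then (1 : ℝ) else 0))) := by
        apply mul_le_mul_of_nonneg_left _ (by positivity)
        exact Finset.sum_le_sum fun r _ => Finset.sum_le_sum fun k _ => final1 r k
    _ = (1 / ((m : ℝ) * n)) * ((∑ t ∈ Finset.Icc 1 T, η t)⁻¹
          * ∑ t ∈ Finset.Icc 1 T, η t * ((m : ℝ) * n
            * (Abnd t + (2 * L / ((m : ℝ) * n)) * ∑ s ∈ Finset.Icc 1 t, η s))) := by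
        rw [← hswap]
        rw [Finset.sum_congr rfl fun r (_ : r ∈ Finset.univ) => (Finset.mul_sum _ _ _).symm,
          ← Finset.mul_sum]
    _ = (∑ t ∈ Finset.Icc 1 T, η t)⁻¹ * ∑ t ∈ Finset.Icc 1 T,
          η t * (Abnd t + (2 * L / ((m : ℝ) * n)) * ∑ s ∈ Finset.Icc 1 t, η s) := by
        have hpull : ∑ t ∈ Finset.Icc 1 T, η t * ((m : ℝ) * n
              * (Abnd t + (2 * L / ((m : ℝ) * n)) * ∑ s ∈ Finset.Icc 1 t, η s))
            = (m : ℝ) * n * ∑ t ∈ Finset.Icc 1 T,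
              η t * (Abnd t + (2 * L / ((m : ℝ) * n)) * ∑ s ∈ Finset.Icc 1 t, η s) := by
          rw [Finset.mul_sum]
          exact Finset.sum_congr rfl fun t _ => by ring
        rw [hpull]
        field_simp
        try ring
    _ = (∑ t ∈ Finset.Icc 1 T, η t)⁻¹ * ∑ t ∈ Finset.Icc 1 T,
          η t * (4 * β * L * ∑ s ∈ Finset.Icc 1 t,
              η s * ∑ q ∈ Finset.Icc 1 (s - 1), η q * lam ^ (s - q - 1)
            + (2 * L / ((m : ℝ) * n)) * ∑ s ∈ Finset.Icc 1 t, η s) := by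
        congr 1

end Main
end
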